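/- arXiv:2312.17059 — 7 statements merged into one kernel-verified Lean document; each statement's English description precedes it below -/
import Mathlib

section
/- Let N be an odd perfect number written in Euler form N = p^α · q_1^{2β_1} · … · q_{r-1}^{2β_{r-1}}, let ℓ be a prime and k a positive integer such that ℓ^k divides 2β_i + 1 for every i = 1, …, r−1 but ℓ^{5k} does not divide N. Let S be the set of prime factors q_i of N (i = 1, …, r−1) with q_i ≡ 1 (mod ℓ). Then 1 ≤ #S ≤ 4. -/
/-
Write `geomSum x n = 1 + x + ⋯ + x ^ (n - 1)`, so that `σ (q ^ (n - 1)) = geomSum q n` for a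
prime `q`, and `σ N = 2 N` reads `geomSum p (α + 1) * ∏ i, geomSum (q i) (2 β i + 1) = 2 N`.

Upper bound: if `q i ≡ 1 (mod ℓ)` then `ℓ ^ k ∣ geomSum (q i) (2 β i + 1)`, so five such `q i`
would give `ℓ ^ (5 k) ∣ 2 N`, and `ℓ` is odd.

Lower bound: suppose no `q i ≡ 1 (mod ℓ)`. Every prime factor `t` of `geomSum (q i) ℓ` then has
`q i` of order `ℓ` modulo `t`, so `t ≡ 1 (mod ℓ)`, and the only such prime dividing `2 N` is `p`.
Hence each `geomSum (q i) ℓ` is a power of `p`, and `p ≡ 1 (mod ℓ)`. Writing `2 β i + 1 = ℓ m`,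
the factor `geomSum (q i ^ m) ℓ` of `σ (q i ^ (2 β i))` has only the prime factors `ℓ` and `p`,
whose multiplicities lifting the exponent bounds so well that `m = 1`. Then comparing `p`-parts
gives `p ^ α = ∏ i, geomSum (q i) ℓ` and `σ (p ^ α) = 2 ∏ i, q i ^ (ℓ - 1)`; as `q` divides
`geomSum q ℓ - 1` exactly once, lifting the exponent once more gives `q i ^ (ℓ - 2) ∣ α + 1`.
Finally `p ≥ 13` because `4 ℓ ∣ p - 1`, which is incompatible with
`p ^ α < (∏ i, q i) ^ ℓ ≤ (α + 1) ^ (ℓ / (ℓ - 2))`.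
-/

open Finset

def geomSum (x n : ℕ) : ℕ := ∑ j ∈ range n, x ^ j

theorem geomSum_succ (x n : ℕ) : geomSum x (n + 1) = 1 + x * geomSum x n := by
  simp only [geomSum, sum_range_succ', pow_succ', ← mul_sum, pow_zero, add_comm]

theorem geomSum_mul_sub_one_add_one {x : ℕ} (hx : 1 ≤ x) (n : ℕ) :
    geomSum x n * (x - 1) + 1 = x ^ n := by
  obtain ⟨y, rfl⟩ := Nat.exists_eq_add_of_le' hx
  simpa [geomSum] using geom_sum_mul_add y n

theorem geomSum_dvd_pow_sub_one (x n : ℕ) : geomSum x n ∣ x ^ n - 1 := by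
  rcases Nat.eq_zero_or_pos x with rfl | hx
  · cases n <;> simp
  · exact ⟨x - 1, by have := geomSum_mul_sub_one_add_one hx n; omega⟩

theorem geomSum_pos (x : ℕ) {n : ℕ} (hn : n ≠ 0) : 0 < geomSum x n :=
  Nat.one_pos.trans_le <| by
    simpa [geomSum] using single_le_sum (f := (x ^ ·)) (fun _ _ => Nat.zero_le _)
      (mem_range.mpr (Nat.pos_of_ne_zero hn))

theorem pow_pred_le_geomSum (x : ℕ) {n : ℕ} (hn : n ≠ 0) : x ^ (n - 1) ≤ geomSum x n :=
  single_le_sum (f := (x ^ ·)) (fun _ _ => Nat.zero_le _) (mem_range.mpr (by omega))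

theorem geomSum_lt_pow {x : ℕ} (hx : 2 ≤ x) (n : ℕ) : geomSum x n < x ^ n := by
  have := geomSum_mul_sub_one_add_one (by omega : 1 ≤ x) n
  have : geomSum x n ≤ geomSum x n * (x - 1) := Nat.le_mul_of_pos_right _ (by omega)
  omega

theorem geomSum_mul (x a b : ℕ) : geomSum x (a * b) = geomSum x a * geomSum (x ^ a) b := by
  induction b with
  | zero => simp [geomSum]
  | succ b ih =>
    simp only [geomSum] at *
    rw [Nat.mul_succ, sum_range_add, ih, sum_range_succ, mul_add,
      Finset.sum_mul _ _ ((x ^ a) ^ b)]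
    congr 1
    exact sum_congr rfl fun j _ => by ring

theorem geomSum_dvd_geomSum (x : ℕ) {a b : ℕ} (h : a ∣ b) : geomSum x a ∣ geomSum x b := by
  obtain ⟨c, rfl⟩ := h
  exact geomSum_mul x a c ▸ dvd_mul_right _ _

theorem geomSum_modEq {m x : ℕ} (h : x ≡ 1 [MOD m]) (n : ℕ) : geomSum x n ≡ n [MOD m] := by
  induction n with
  | zero => rfl
  | succ n ih => simpa [geomSum, sum_range_succ] using ih.add (by simpa using h.pow n)

theorem coprime_geomSum_succ (x n : ℕ) : Nat.Coprime x (geomSum x (n + 1)) := by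
  rw [geomSum_succ, mul_comm, Nat.coprime_add_mul_right_right]
  exact Nat.coprime_one_right x

theorem pow_dvd_geomSum {ℓ x : ℕ} (hx : x ≡ 1 [MOD ℓ]) (k : ℕ) {n : ℕ} (hn : ℓ ^ k ∣ n) :
    ℓ ^ k ∣ geomSum x n := by
  induction k generalizing x n with
  | zero => simp
  | succ k ih =>
    obtain ⟨m, rfl⟩ := hn
    have hℓ : ℓ ∣ geomSum x ℓ := ((geomSum_modEq hx ℓ).dvd_iff dvd_rfl).mpr dvd_rfl
    rw [show ℓ ^ (k + 1) * m = ℓ * (ℓ ^ k * m) by ring, geomSum_mul, pow_succ']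
    exact mul_dvd_mul hℓ (ih (by simpa using hx.pow ℓ) (dvd_mul_right _ _))

theorem pow_modEq_one_of_dvd_geomSum {t x n : ℕ} (h : t ∣ geomSum x n) : x ^ n ≡ 1 [MOD t] := by
  rw [← ZMod.natCast_eq_natCast_iff, Nat.cast_pow, Nat.cast_one, ← sub_eq_zero,
    ← geom_sum_mul]
  have : ((geomSum x n : ℕ) : ZMod t) = 0 := (ZMod.natCast_eq_zero_iff _ _).mpr h
  simp only [geomSum, Nat.cast_sum, Nat.cast_pow] at this
  rw [this, zero_mul]

theorem dvd_of_dvd_geomSum_of_modEq_one {t x n : ℕ} (hx : x ≡ 1 [MOD t]) (h : t ∣ geomSum x n) :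
    t ∣ n :=
  ((geomSum_modEq hx n).dvd_iff dvd_rfl).mp h

theorem Nat.Prime.eq_or_modEq_one_of_dvd_geomSum {ℓ t x : ℕ} (hℓ : ℓ.Prime) (ht : t.Prime)
    (h : t ∣ geomSum x ℓ) : t = ℓ ∨ t ≡ 1 [MOD ℓ] := by
  by_cases hx : x ≡ 1 [MOD t]
  · exact .inl ((Nat.prime_dvd_prime_iff_eq ht hℓ).mp (dvd_of_dvd_geomSum_of_modEq_one hx h))
  · have := Fact.mk ht
    have := Fact.mk hℓ
    have hpow : (x : ZMod t) ^ ℓ = 1 := by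
      simpa using (ZMod.natCast_eq_natCast_iff _ _ _).mpr (pow_modEq_one_of_dvd_geomSum h)
    have hx1 : (x : ZMod t) ≠ 1 := fun h1 =>
      hx ((ZMod.natCast_eq_natCast_iff _ _ _).mp (by simpa using h1))
    have hx0 : (x : ZMod t) ≠ 0 := by
      rintro h0
      rw [h0, zero_pow hℓ.ne_zero] at hpow
      exact zero_ne_one hpow
    have hℓt : ℓ ∣ t - 1 := orderOf_eq_prime hpow hx1 ▸ ZMod.orderOf_dvd_card_sub_one hx0
    exact .inr ((Nat.modEq_iff_dvd' ht.one_lt.le).mpr hℓt).symm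

theorem modEq_one_of_dvd_geomSum_self {ℓ x : ℕ} (hℓ : ℓ.Prime) (h : ℓ ∣ geomSum x ℓ) :
    x ≡ 1 [MOD ℓ] := by
  have := Fact.mk hℓ
  rw [← ZMod.natCast_eq_natCast_iff, ← ZMod.pow_card (x : ZMod ℓ)]
  simpa using (ZMod.natCast_eq_natCast_iff _ _ _).mpr (pow_modEq_one_of_dvd_geomSum h)

theorem modEq_one_of_prime_dvd_geomSum {ℓ t x : ℕ} (hℓ : ℓ.Prime) (hx : ¬ x ≡ 1 [MOD ℓ])
    (ht : t.Prime) (h : t ∣ geomSum x ℓ) : t ≡ 1 [MOD ℓ] :=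
  (hℓ.eq_or_modEq_one_of_dvd_geomSum ht h).resolve_left
    fun htℓ => hx (modEq_one_of_dvd_geomSum_self hℓ (htℓ ▸ h))

theorem exists_geomSum_eq_pow {ℓ p x : ℕ} (hℓ : ℓ.Prime) (hx : ¬ x ≡ 1 [MOD ℓ]) (hx2 : 2 ≤ x)
    (hprimes : ∀ t, t.Prime → t ∣ geomSum x ℓ → t ≡ 1 [MOD ℓ] → t = p) :
    ∃ e ≠ 0, geomSum x ℓ = p ^ e := by
  have hlt : 1 < geomSum x ℓ := hx2.trans ((Nat.le_self_pow (by have := hℓ.two_le; omega) x).trans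
    (pow_pred_le_geomSum x hℓ.ne_zero))
  have h := Nat.eq_prime_pow_of_unique_prime_dvd (by omega) fun ht htd =>
    hprimes _ ht htd (modEq_one_of_prime_dvd_geomSum hℓ hx ht htd)
  refine ⟨_, fun he => ?_, h⟩
  rw [he, pow_zero] at h
  omega

section LiftingTheExponent

variable {t : ℕ} [Fact t.Prime]

theorem padicValNat_pow_sub_one (ht : Odd t) {y : ℕ} (hy : 2 ≤ y) (hdvd : t ∣ y - 1) {m : ℕ}
    (hm : m ≠ 0) : padicValNat t (y ^ m - 1) = padicValNat t (y - 1) + padicValNat t m := by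
  have hty : ¬ t ∣ y := fun h => (Fact.out : t.Prime).ne_one <|
    (Nat.Coprime.coprime_dvd_left h ((Nat.coprime_self_sub_right (by omega)).mpr
      (Nat.coprime_one_right y))).eq_one_of_dvd hdvd
  simpa using padicValNat.pow_sub_pow (y := 1) ht (by omega) hdvd hty hm

theorem padicValNat_geomSum (ht : Odd t) {x : ℕ} (hx : 2 ≤ x) (hdvd : t ∣ x - 1) {n : ℕ}
    (hn : n ≠ 0) : padicValNat t (geomSum x n) = padicValNat t n := by
  have h := padicValNat_pow_sub_one ht hx hdvd hn
  rw [← geomSum_mul_sub_one_add_one (by omega : 1 ≤ x) n, Nat.add_sub_cancel,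
    padicValNat.mul (geomSum_pos x hn).ne' (by omega)] at h
  omega

theorem padicValNat_le_of_dvd_pow_sub_one (ht : Odd t) {y : ℕ} (hy : 2 ≤ y) (hdvd : t ∣ y - 1)
    {m A : ℕ} (hm : m ≠ 0) (hA : A ∣ y ^ m - 1) :
    padicValNat t A ≤ padicValNat t (y - 1) + padicValNat t m := by
  have hne : y ^ m - 1 ≠ 0 := by
    have := Nat.one_lt_pow hm (by omega : 1 < y)
    omega
  rw [← padicValNat_pow_sub_one ht hy hdvd hm]
  exact (padicValNat_dvd_iff_le hne).mp (pow_padicValNat_dvd.trans hA)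

theorem padicValNat_geomSum_sub_one {n : ℕ} (hn : 2 ≤ n) :
    padicValNat t (geomSum t n - 1) = 1 := by
  have ht : t.Prime := Fact.out
  obtain ⟨m, rfl⟩ := Nat.exists_eq_add_of_le' hn
  have hndvd : ¬ t ∣ geomSum t (m + 1) := ht.coprime_iff_not_dvd.mp (coprime_geomSum_succ t m)
  rw [geomSum_succ, Nat.add_sub_cancel_left,
    padicValNat.mul ht.ne_zero (geomSum_pos t m.succ_ne_zero).ne', padicValNat_self,
    padicValNat.eq_zero_of_not_dvd hndvd]

end LiftingTheExponent

theorem geomSum_pow_le {ℓ p x m : ℕ} (hℓ : ℓ.Prime) (hℓodd : Odd ℓ) (hp : p.Prime)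
    (hpodd : Odd p) (hx : 2 ≤ x) (hpx : p ∣ x ^ ℓ - 1) (hm : m ≠ 0)
    (hprimes : ∀ t, t.Prime → t ∣ geomSum (x ^ m) ℓ → t = ℓ ∨ t = p) :
    geomSum (x ^ m) ℓ ≤ ℓ * ((x ^ ℓ - 1) * m) := by
  have hxm : 2 ≤ x ^ m := hx.trans (Nat.le_self_pow hm x)
  have hxℓ : 2 ≤ x ^ ℓ := hx.trans (Nat.le_self_pow hℓ.ne_zero x)
  have hB : x ^ ℓ - 1 ≠ 0 := by omega
  have hC : ℓ * ((x ^ ℓ - 1) * m) ≠ 0 := Nat.mul_ne_zero hℓ.ne_zero (Nat.mul_ne_zero hB hm)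
  refine Nat.le_of_dvd (Nat.pos_of_ne_zero hC) ?_
  rw [← Nat.factorization_prime_le_iff_dvd (geomSum_pos _ hℓ.ne_zero).ne' hC]
  intro t ht
  by_cases htA : t ∣ geomSum (x ^ m) ℓ
  swap
  · simp [Nat.factorization_eq_zero_of_not_dvd htA]
  have := Fact.mk ht
  rw [Nat.factorization_def _ ht, Nat.factorization_def _ ht, padicValNat.mul hℓ.ne_zero
    (Nat.mul_ne_zero hB hm), padicValNat.mul hB hm]
  rcases hprimes t ht htA with rfl | rfl
  · have hdvd : t ∣ x ^ m - 1 :=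
      (Nat.modEq_iff_dvd' (by omega)).mp (modEq_one_of_dvd_geomSum_self ht htA).symm
    rw [padicValNat_geomSum hℓodd hxm hdvd hℓ.ne_zero, padicValNat_self]
    omega
  · have hdvd : geomSum (x ^ m) ℓ ∣ (x ^ ℓ) ^ m - 1 := by
      rw [← pow_mul, mul_comm, pow_mul]
      exact geomSum_dvd_pow_sub_one _ _
    have := padicValNat_le_of_dvd_pow_sub_one hpodd hxℓ hpx hm hdvd
    omega

theorem le_three_pow_sub_two {n : ℕ} (hn : 3 ≤ n) : n ≤ 3 ^ (n - 2) := by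
  induction n, hn using Nat.le_induction with
  | base => norm_num
  | succ n hn ih =>
    rw [show n + 1 - 2 = n - 2 + 1 by omega, pow_succ]
    omega

theorem mul_lt_geomSum_pow {ℓ x m : ℕ} (hx : 3 ≤ x) (hℓ : 3 ≤ ℓ) (hm : 3 ≤ m) :
    ℓ * ((x ^ ℓ - 1) * m) < geomSum (x ^ m) ℓ := by
  have hℓm : ℓ * m ≤ x ^ (ℓ + m - 4) := calc
    ℓ * m ≤ 3 ^ (ℓ - 2) * 3 ^ (m - 2) :=
      Nat.mul_le_mul (le_three_pow_sub_two hℓ) (le_three_pow_sub_two hm)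
    _ = 3 ^ (ℓ + m - 4) := by rw [← pow_add]; congr 1; omega
    _ ≤ x ^ (ℓ + m - 4) := Nat.pow_le_pow_left hx _
  have hexp : ℓ + m - 4 + ℓ ≤ m * (ℓ - 1) := by
    obtain ⟨a, rfl⟩ := Nat.exists_eq_add_of_le' hℓ
    obtain ⟨b, rfl⟩ := Nat.exists_eq_add_of_le' hm
    rw [show a + 3 - 1 = a + 2 by omega, show a + 3 + (b + 3) - 4 = a + b + 2 by omega]
    nlinarith
  calc ℓ * ((x ^ ℓ - 1) * m) = ℓ * m * (x ^ ℓ - 1) := by ring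
    _ < ℓ * m * x ^ ℓ :=
      Nat.mul_lt_mul_of_pos_left (Nat.sub_lt (by positivity) one_pos) (by positivity)
    _ ≤ x ^ (ℓ + m - 4) * x ^ ℓ := Nat.mul_le_mul_right _ hℓm
    _ = x ^ (ℓ + m - 4 + ℓ) := (pow_add _ _ _).symm
    _ ≤ x ^ (m * (ℓ - 1)) := Nat.pow_le_pow_right (by omega) hexp
    _ = (x ^ m) ^ (ℓ - 1) := pow_mul _ _ _
    _ ≤ geomSum (x ^ m) ℓ := pow_pred_le_geomSum _ (by omega)

theorem eq_of_prime_factors_geomSum {ℓ p x n : ℕ} (hℓ : ℓ.Prime) (hℓodd : Odd ℓ) (hp : p.Prime)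
    (hpodd : Odd p) (hx : 3 ≤ x) (hpx : p ∣ geomSum x ℓ) (hℓn : ℓ ∣ n) (hn : Odd n)
    (hprimes : ∀ t, t.Prime → t ∣ geomSum x n → t ≡ 1 [MOD ℓ] → t = p) : n = ℓ := by
  obtain ⟨m, rfl⟩ := hℓn
  obtain ⟨c, rfl⟩ := (Nat.odd_mul.mp hn).2
  by_contra hne
  have hm : 3 ≤ 2 * c + 1 := by
    rcases c with _ | c
    · simp at hne
    · omega
  have hℓ3 : 3 ≤ ℓ := by obtain ⟨d, rfl⟩ := hℓodd; have := hℓ.two_le; omega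
  have hA : geomSum (x ^ (2 * c + 1)) ℓ ∣ geomSum x (ℓ * (2 * c + 1)) := by
    rw [Nat.mul_comm ℓ, geomSum_mul]
    exact dvd_mul_left _ _
  refine (mul_lt_geomSum_pow hx hℓ3 hm).not_ge ?_
  refine geomSum_pow_le hℓ hℓodd hp hpodd (by omega) (hpx.trans (geomSum_dvd_pow_sub_one x ℓ))
    (by omega) fun t ht htA => ?_
  exact (hℓ.eq_or_modEq_one_of_dvd_geomSum ht htA).imp_right (hprimes t ht (htA.trans hA))

theorem eq_of_mul_prime_pow_eq {p a b m n : ℕ} (hp : p.Prime) (ha : ¬ p ∣ a) (hb : ¬ p ∣ b)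
    (h : a * p ^ m = b * p ^ n) : m = n ∧ a = b := by
  have := Fact.mk hp
  have hval : ∀ {c k : ℕ}, ¬ p ∣ c → padicValNat p (c * p ^ k) = k := fun hc => by
    rw [padicValNat.mul (by rintro rfl; exact hc (dvd_zero p)) (pow_ne_zero _ hp.ne_zero),
      padicValNat.eq_zero_of_not_dvd hc, padicValNat.prime_pow, zero_add]
  obtain rfl : m = n := by rw [← hval (k := m) ha, h, hval hb]
  exact ⟨rfl, Nat.eq_of_mul_eq_mul_right (pow_pos hp.pos m) h⟩

theorem pow_sub_two_dvd_of_geomSum_eq_pow {q ℓ p e n : ℕ} (hq : q.Prime) (hqodd : Odd q)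
    (hℓ : 2 ≤ ℓ) (he : geomSum q ℓ = p ^ e) (hn : n ≠ 0) (h : q ^ (ℓ - 1) ∣ geomSum p n) :
    q ^ (ℓ - 2) ∣ n := by
  have := Fact.mk hq
  have hy : 2 ≤ p ^ e := he ▸ hq.two_le.trans
    ((Nat.le_self_pow (by omega) q).trans (pow_pred_le_geomSum q (by omega)))
  have hv : padicValNat q (p ^ e - 1) = 1 := he ▸ padicValNat_geomSum_sub_one hℓ
  have hdvd : geomSum p n ∣ (p ^ e) ^ n - 1 := (geomSum_dvd_pow_sub_one p n).trans <| by
    rw [← pow_mul, mul_comm, pow_mul]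
    simpa using Nat.sub_dvd_pow_sub_pow (p ^ n) 1 e
  have hle := padicValNat_le_of_dvd_pow_sub_one hqodd hy
    (dvd_of_one_le_padicValNat hv.ge) hn hdvd
  have hge := (padicValNat_dvd_iff_le (geomSum_pos p hn).ne').mp h
  exact (padicValNat_dvd_iff_le hn).mpr (by omega)

theorem prod_pow_dvd_of_forall_pow_dvd {ι : Type*} [Fintype ι] {q : ι → ℕ}
    (hq : ∀ i, (q i).Prime) (hinj : Function.Injective q) {m n : ℕ} (h : ∀ i, q i ^ m ∣ n) :
    (∏ i, q i) ^ m ∣ n := by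
  rw [← prod_pow, ← Int.natCast_dvd_natCast, Nat.cast_prod]
  refine Fintype.prod_dvd_of_coprime (fun i j hij => ?_) fun i => Int.natCast_dvd_natCast.mpr (h i)
  exact Nat.isCoprime_iff_coprime.mpr
    (Nat.Coprime.pow _ _ ((Nat.coprime_primes (hq i) (hq j)).mpr (hinj.ne hij)))

theorem pow_le_pow_of_pow_sub_two_le_succ {Q p α ℓ : ℕ} (hp : 8 ≤ p) (hℓ : 3 ≤ ℓ)
    (hQ : Q ^ (ℓ - 2) ≤ α + 1) : Q ^ ℓ ≤ p ^ α := by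
  rw [← Nat.pow_le_pow_iff_left (by omega : ℓ - 2 ≠ 0)]
  calc (Q ^ ℓ) ^ (ℓ - 2) = (Q ^ (ℓ - 2)) ^ ℓ := by rw [← pow_mul, ← pow_mul, mul_comm]
    _ ≤ (α + 1) ^ ℓ := Nat.pow_le_pow_left hQ ℓ
    _ ≤ (α + 1) ^ (3 * (ℓ - 2)) := Nat.pow_le_pow_right (by omega) (by omega)
    _ = ((α + 1) ^ 3) ^ (ℓ - 2) := pow_mul _ _ _
    _ ≤ (8 ^ α) ^ (ℓ - 2) := by
      refine Nat.pow_le_pow_left ?_ _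
      calc (α + 1) ^ 3 ≤ (2 ^ α) ^ 3 := Nat.pow_le_pow_left Nat.lt_two_pow_self 3
        _ = 8 ^ α := by rw [← pow_mul, mul_comm, pow_mul]; norm_num
    _ ≤ (p ^ α) ^ (ℓ - 2) := Nat.pow_le_pow_left (Nat.pow_le_pow_left hp α) _

theorem geomSum_mul_prod_ne_of_geomSum_eq_pow {ι : Type*} [Fintype ι] [Nonempty ι] {p α ℓ : ℕ}
    {q e : ι → ℕ} (hp : p.Prime) (hp8 : 8 ≤ p) (hq : ∀ i, (q i).Prime)
    (hqodd : ∀ i, Odd (q i)) (hinj : Function.Injective q) (hpq : ∀ i, p ≠ q i) (hℓ : 3 ≤ ℓ)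
    (he : ∀ i, geomSum (q i) ℓ = p ^ e i) :
    geomSum p (α + 1) * ∏ i, geomSum (q i) ℓ ≠ 2 * (p ^ α * ∏ i, q i ^ (ℓ - 1)) := by
  intro hσ
  have hprod : ∏ i, geomSum (q i) ℓ = p ^ ∑ i, e i := by simp only [he, prod_pow_eq_pow_sum]
  have hpQ : ¬ p ∣ 2 * ∏ i, q i ^ (ℓ - 1) := by
    rw [hp.prime.dvd_mul, Prime.dvd_finsetProd_iff hp.prime]
    rintro (h2 | ⟨i, -, hi⟩)
    · exact absurd (Nat.le_of_dvd two_pos h2) (by omega)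
    · exact hpq i ((Nat.prime_dvd_prime_iff_eq hp (hq i)).mp (hp.dvd_of_dvd_pow hi))
  have hσ' : geomSum p (α + 1) * p ^ ∑ i, e i = (2 * ∏ i, q i ^ (ℓ - 1)) * p ^ α := by
    rw [← hprod, hσ]
    ring
  obtain ⟨hsum, hσp⟩ :=
    eq_of_mul_prime_pow_eq hp (hp.coprime_iff_not_dvd.mp (coprime_geomSum_succ p α)) hpQ hσ'
  have hdvd : (∏ i, q i) ^ (ℓ - 2) ∣ α + 1 := prod_pow_dvd_of_forall_pow_dvd hq hinj fun j =>
    pow_sub_two_dvd_of_geomSum_eq_pow (hq j) (hqodd j) (by omega) (he j) α.succ_ne_zero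
      (hσp ▸ dvd_mul_of_dvd_right (dvd_prod_of_mem _ (mem_univ j)) 2)
  have hlt : p ^ α < (∏ i, q i) ^ ℓ := by
    rw [← hsum, ← hprod, ← prod_pow]
    exact prod_lt_prod_of_nonempty (fun i _ => geomSum_pos _ (by omega))
      (fun i _ => geomSum_lt_pow (hq i).two_le ℓ) univ_nonempty
  exact hlt.not_ge (pow_le_pow_of_pow_sub_two_le_succ hp8 hℓ (Nat.le_of_dvd α.succ_pos hdvd))

theorem sigma_one_prime_pow_mul_prod {ι : Type*} [Fintype ι] {p α : ℕ} {q a : ι → ℕ}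
    (hp : p.Prime) (hq : ∀ i, (q i).Prime) (hinj : Function.Injective q) (hpq : ∀ i, p ≠ q i) :
    ArithmeticFunction.sigma 1 (p ^ α * ∏ i, q i ^ a i) =
      geomSum p (α + 1) * ∏ i, geomSum (q i) (a i + 1) := by
  open ArithmeticFunction in
  rw [isMultiplicative_sigma.map_mul_of_coprime (Nat.Coprime.prod_right fun i _ =>
      Nat.Coprime.pow _ _ ((Nat.coprime_primes hp (hq i)).mpr (hpq i))),
    isMultiplicative_sigma.map_prod _ _ fun i _ j _ hij =>
      Nat.Coprime.pow _ _ ((Nat.coprime_primes (hq i) (hq j)).mpr (hinj.ne hij)),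
    sigma_one_apply_prime_pow hp]
  exact congrArg _ (prod_congr rfl fun i _ => sigma_one_apply_prime_pow (hq i))

theorem geomSum_succ_ne_two_mul_pow {p α : ℕ} (hp : p.Prime) (hα : α ≠ 0) :
    geomSum p (α + 1) ≠ 2 * p ^ α := fun h =>
  (hp.coprime_iff_not_dvd.mp (coprime_geomSum_succ p α))
    (h ▸ dvd_mul_of_dvd_right (dvd_pow_self p hα) 2)

theorem eq_of_prime_dvd_of_modEq_one {ι : Type*} [Fintype ι] {p α ℓ t : ℕ} {q a : ι → ℕ}
    (hℓ : 3 ≤ ℓ) (hp : p.Prime) (hq : ∀ i, (q i).Prime) (hnone : ∀ i, ¬ q i ≡ 1 [MOD ℓ])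
    (ht : t.Prime) (htℓ : t ≡ 1 [MOD ℓ]) (hdvd : t ∣ 2 * (p ^ α * ∏ i, q i ^ a i)) : t = p := by
  rcases (Nat.Prime.dvd_mul ht).mp hdvd with h2 | h
  · rw [(Nat.prime_dvd_prime_iff_eq ht Nat.prime_two).mp h2, Nat.ModEq,
      Nat.mod_eq_of_lt (by omega : 2 < ℓ), Nat.mod_eq_of_lt (by omega : 1 < ℓ)] at htℓ
    omega
  rcases (Nat.Prime.dvd_mul ht).mp h with hp' | hq'
  · exact (Nat.prime_dvd_prime_iff_eq ht hp).mp (ht.dvd_of_dvd_pow hp')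
  · obtain ⟨i, -, hi⟩ := (Prime.dvd_finsetProd_iff ht.prime _).mp hq'
    rw [(Nat.prime_dvd_prime_iff_eq ht (hq i)).mp (ht.dvd_of_dvd_pow hi)] at htℓ
    exact absurd htℓ (hnone i)

theorem exists_modEq_one_of_sigma_eq {ι : Type*} [Fintype ι] [Nonempty ι] {p α ℓ : ℕ}
    {q β : ι → ℕ} (hp : p.Prime) (hpodd : Odd p) (hp4 : p % 4 = 1) (hq : ∀ i, (q i).Prime)
    (hqodd : ∀ i, Odd (q i)) (hinj : Function.Injective q) (hpq : ∀ i, p ≠ q i)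
    (hℓ : ℓ.Prime) (hℓodd : Odd ℓ) (hℓdvd : ∀ i, ℓ ∣ 2 * β i + 1)
    (hσ : geomSum p (α + 1) * ∏ i, geomSum (q i) (2 * β i + 1) =
      2 * (p ^ α * ∏ i, q i ^ (2 * β i))) :
    ∃ i, q i ≡ 1 [MOD ℓ] := by
  by_contra! hnone
  obtain ⟨i₀⟩ := ‹Nonempty ι›
  have hℓ3 : 3 ≤ ℓ := by obtain ⟨d, rfl⟩ := hℓodd; have := hℓ.two_le; omega
  have hq3 : ∀ i, 3 ≤ q i := fun i => by
    obtain ⟨d, hd⟩ := hqodd i; have := (hq i).two_le; omega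
  have hprimes : ∀ i t, t.Prime → t ∣ geomSum (q i) (2 * β i + 1) → t ≡ 1 [MOD ℓ] → t = p :=
    fun i t ht htd htℓ => eq_of_prime_dvd_of_modEq_one hℓ3 hp hq hnone ht htℓ
      (hσ ▸ dvd_mul_of_dvd_right
        (htd.trans (dvd_prod_of_mem (fun i => geomSum (q i) (2 * β i + 1)) (mem_univ i))) _)
  choose e he0 he using fun i => exists_geomSum_eq_pow hℓ (hnone i) (hq i).two_le
    fun t ht htd => hprimes i t ht (htd.trans (geomSum_dvd_geomSum _ (hℓdvd i)))
  have hpdvd : ∀ i, p ∣ geomSum (q i) ℓ := fun i => he i ▸ dvd_pow_self p (he0 i)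
  have hexp : ∀ i, 2 * β i = ℓ - 1 := fun i => by
    have := eq_of_prime_factors_geomSum hℓ hℓodd hp hpodd (hq3 i) (hpdvd i) (hℓdvd i)
      (odd_two_mul_add_one _) (hprimes i)
    omega
  have hp8 : 8 ≤ p := by
    have hpℓ := modEq_one_of_prime_dvd_geomSum hℓ (hnone i₀) hp (hpdvd i₀)
    have h4ℓ : 4 * ℓ ∣ p - 1 :=
      Nat.Coprime.mul_dvd_of_dvd_of_dvd (Nat.Coprime.pow_left 2 (Nat.coprime_two_left.mpr hℓodd))
        (by omega) ((Nat.modEq_iff_dvd' hp.one_lt.le).mp hpℓ.symm)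
    have := Nat.le_of_dvd (by have := hp.two_le; omega) h4ℓ
    omega
  simp only [hexp, Nat.sub_add_cancel hℓ.one_le] at hσ
  exact geomSum_mul_prod_ne_of_geomSum_eq_pow hp hp8 hq hqodd hinj hpq hℓ3 he hσ

theorem card_filter_modEq_one_lt {ι : Type*} [Fintype ι] {q n : ι → ℕ} {ℓ k m M : ℕ}
    (hℓ : Odd ℓ) (hn : ∀ i, ℓ ^ k ∣ n i) (hM : ∏ i, geomSum (q i) (n i) ∣ 2 * M)
    (hnd : ¬ ℓ ^ (m * k) ∣ M) : #{i | q i ≡ 1 [MOD ℓ]} < m := by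
  by_contra! hm
  have h1 : ℓ ^ (m * k) ∣ (ℓ ^ k) ^ #{i | q i ≡ 1 [MOD ℓ]} := by
    rw [← pow_mul, mul_comm]
    exact pow_dvd_pow _ (Nat.mul_le_mul_left k hm)
  have h2 : (ℓ ^ k) ^ #{i | q i ≡ 1 [MOD ℓ]} ∣ ∏ i with q i ≡ 1 [MOD ℓ], geomSum (q i) (n i) := by
    rw [← prod_const]
    exact prod_dvd_prod_of_dvd _ _ fun i hi => pow_dvd_geomSum (mem_filter.mp hi).2 k (hn i)
  have h3 := prod_dvd_prod_of_subset _ _ (fun i => geomSum (q i) (n i))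
    (filter_subset (fun i => q i ≡ 1 [MOD ℓ]) univ)
  exact hnd ((Nat.Coprime.pow_left _ (Nat.coprime_two_right.mpr hℓ)).dvd_of_dvd_mul_left
    (h1.trans (h2.trans (h3.trans hM))))

theorem card_S_between_one_and_four_general
    (N p α s : ℕ) (q β : Fin s → ℕ)
    (hN : N = p ^ α * ∏ i, q i ^ (2 * β i))
    (hperf : ArithmeticFunction.sigma 1 N = 2 * N)
    (hp : p.Prime) (hpodd : Odd p)
    (hq : ∀ i, (q i).Prime) (hqodd : ∀ i, Odd (q i))
    (hinj : Function.Injective q)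
    (hpq : ∀ i, p ≠ q i)
    (hp4 : p % 4 = 1)
    (hαpos : 0 < α)
    (ℓ k : ℕ) (hℓ : ℓ.Prime) (hkpos : 0 < k)
    (hdvd : ∀ i, ℓ ^ k ∣ 2 * β i + 1)
    (hnd : ¬ ℓ ^ (5 * k) ∣ N)
    (S : Finset ℕ)
    (hSdef : S = (Finset.univ.filter fun i => q i ≡ 1 [MOD ℓ]).image q) :
    1 ≤ S.card ∧ S.card ≤ 4 := by
  have hσ : geomSum p (α + 1) * ∏ i, geomSum (q i) (2 * β i + 1) = 2 * N := by
    rw [← hperf, hN, sigma_one_prime_pow_mul_prod hp hq hinj hpq]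
  have hs : Nonempty (Fin s) := by
    refine Fin.pos_iff_nonempty.mp (Nat.pos_of_ne_zero fun hs0 => ?_)
    subst hs0
    simp only [univ_eq_empty, prod_empty, mul_one] at hσ hN
    exact geomSum_succ_ne_two_mul_pow hp hαpos.ne' (hN ▸ hσ)
  have i₀ : Fin s := hs.some
  have hℓdvd : ∀ i, ℓ ∣ 2 * β i + 1 := fun i => (dvd_pow_self ℓ hkpos.ne').trans (hdvd i)
  have hℓodd : Odd ℓ := (odd_two_mul_add_one (β i₀)).of_dvd_nat (hℓdvd i₀)
  rw [hSdef, card_image_of_injective _ hinj]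
  refine ⟨card_pos.mpr ?_, Nat.lt_succ_iff.mp
    (card_filter_modEq_one_lt hℓodd hdvd (hσ ▸ dvd_mul_left _ _) hnd)⟩
  obtain ⟨i, hi⟩ := exists_modEq_one_of_sigma_eq hp hpodd hp4 hq hqodd hinj hpq hℓ hℓodd hℓdvd
    (hN ▸ hσ)
  exact ⟨i, mem_filter.mpr ⟨mem_univ i, hi⟩⟩

theorem card_S_between_one_and_four
    (N p α s : ℕ) (q β : Fin s → ℕ)
    (hN : N = p ^ α * ∏ i, q i ^ (2 * β i))
    (hodd : Odd N)
    (hperf : ArithmeticFunction.sigma 1 N = 2 * N)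
    (hp : p.Prime) (hpodd : Odd p)
    (hq : ∀ i, (q i).Prime) (hqodd : ∀ i, Odd (q i))
    (hinj : Function.Injective q)
    (hpq : ∀ i, p ≠ q i)
    (hα4 : α % 4 = 1) (hp4 : p % 4 = 1)
    (hαpos : 0 < α) (hβpos : ∀ i, 0 < β i)
    (ℓ k : ℕ) (hℓ : ℓ.Prime) (hkpos : 0 < k)
    (hdvd : ∀ i, ℓ ^ k ∣ 2 * β i + 1)
    (hnd : ¬ ℓ ^ (5 * k) ∣ N)
    (S : Finset ℕ)
    (hSdef : S = (Finset.univ.filter fun i => q i ≡ 1 [MOD ℓ]).image q) :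
    1 ≤ S.card ∧ S.card ≤ 4 :=
  card_S_between_one_and_four_general N p α s q β hN hperf hp hpodd hq hqodd hinj hpq hp4 hαpos ℓ k
    hℓ hkpos hdvd hnd S hSdef
end

section
/- Let N be an odd perfect number written in Euler form N = p^α · q_1^{2β_1} · … · q_{r-1}^{2β_{r-1}}, let ℓ be a prime and k a positive integer. If ℓ^k divides 2β_i + 1 for every i = 1, …, r−1 but ℓ^{5k} does not divide N, then ℓ ≠ q_i for all i = 1, …, r−1. -/
/-!
Suppose `ℓ = qᵢ`. Since `ℓ ^ (2 βᵢ)` divides `N` but `ℓ ^ (5 k)` does not, `2 βᵢ < 5 k`,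
and an odd multiple of `ℓ ^ k` that small must be `ℓ ^ k` itself, with `ℓ ^ k ∈ {3, 5, 9}`.
As `2 βᵢ` is the exact exponent of `ℓ` in `N`, we get `¬ ℓ ^ (ℓ ^ k) ∣ N`.

On the other hand `1 + r + ⋯ + r ^ (ℓ ^ k - 1)` divides `σ(qⱼ ^ (2 βⱼ))` for every `r = qⱼ`, and it
is divisible by `ℓ ^ k` when `r ≡ 1 [MOD ℓ]`; so `3`, `5` and `5` such primes `qⱼ` (for `ℓ ^ k`
equal to `3`, `5`, `9`) would give `ℓ ^ (ℓ ^ k) ∣ N`. They are found by factoring these geometric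
sums, starting from `r = ℓ`: every odd prime factor divides `N`, so it is either some `qⱼ` or `p`,
and in the latter case the factors of `p + 1 ∣ σ(p ^ α)` take over. Primes `≡ 3 [MOD 4]` are
never `p`.
-/

open Finset ArithmeticFunction
open scoped ArithmeticFunction.sigma

theorem geom_sum_range_mul {R : Type*} [CommSemiring R] (r : R) (a b : ℕ) :
    ∑ t ∈ range (a * b), r ^ t = (∑ t ∈ range a, r ^ t) * ∑ u ∈ range b, (r ^ a) ^ u := by
  induction b with
  | zero => simp
  | succ b ih =>
    rw [Nat.mul_succ, sum_range_add, ih, sum_range_succ, mul_add, ← pow_mul, mul_comm _ (r ^ _)]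
    simp only [pow_add, mul_sum]

theorem geom_sum_dvd_geom_sum_of_dvd {R : Type*} [CommSemiring R] (r : R) {m n : ℕ}
    (h : m ∣ n) : ∑ t ∈ range m, r ^ t ∣ ∑ t ∈ range n, r ^ t := by
  obtain ⟨c, rfl⟩ := h
  rw [geom_sum_range_mul]
  exact dvd_mul_right _ _

theorem pow_dvd_geom_sum_of_modEq_one {ℓ r : ℕ} (hr : r ≡ 1 [MOD ℓ]) (k : ℕ) :
    ℓ ^ k ∣ ∑ t ∈ range (ℓ ^ k), r ^ t := by
  induction k with
  | zero => simp
  | succ k ih =>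
    have hℓ : ℓ ∣ ∑ u ∈ range ℓ, (r ^ ℓ ^ k) ^ u := by
      rw [← ZMod.natCast_eq_zero_iff]
      push_cast
      rw [(ZMod.natCast_eq_natCast_iff r 1 ℓ).mpr hr]
      simp
    rw [pow_succ, geom_sum_range_mul]
    exact mul_dvd_mul ih hℓ

theorem five_mul_lt_three_pow {k : ℕ} (hk : 3 ≤ k) : 5 * k < 3 ^ k := by
  induction k, hk using Nat.le_induction with
  | base => norm_num
  | succ k _ ih => rw [pow_succ]; omega

section EulerForm

variable {ι : Type*} [Fintype ι] {p α : ℕ} {q e : ι → ℕ}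

theorem sigma_one_pow_mul_prod_pow (hp : p.Prime) (hq : ∀ i, (q i).Prime)
    (hinj : Function.Injective q) (hpq : ∀ i, p ≠ q i) :
    σ 1 (p ^ α * ∏ i, q i ^ e i) = σ 1 (p ^ α) * ∏ i, σ 1 (q i ^ e i) := by
  have hcop : (p ^ α).Coprime (∏ i, q i ^ e i) :=
    Nat.Coprime.pow_left _ <| Nat.Coprime.prod_right fun i _ ↦
      Nat.Coprime.pow_right _ <| (Nat.coprime_primes hp (hq i)).mpr (hpq i)
  have hpair :
      (↑(univ : Finset ι) : Set ι).Pairwise (Function.onFun Nat.Coprime fun i ↦ q i ^ e i) := fun i _ j _ hij ↦ Nat.Coprime.pow _ _ <| (Nat.coprime_primes (hq i) (hq j)).mpr (hinj.ne hij)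
  rw [isMultiplicative_sigma.map_mul_of_coprime hcop,
    isMultiplicative_sigma.map_prod _ univ hpair]

theorem not_pow_succ_dvd_pow_mul_prod_pow (hp : p.Prime) (hq : ∀ i, (q i).Prime)
    (hinj : Function.Injective q) (hpq : ∀ i, p ≠ q i) (i : ι) :
    ¬ q i ^ (e i + 1) ∣ p ^ α * ∏ j, q j ^ e j := by
  have hprod : ∏ j, q j ^ e j ≠ 0 := prod_ne_zero_iff.mpr fun j _ ↦ pow_ne_zero _ (hq j).ne_zero
  rw [(hq i).pow_dvd_iff_le_factorization (mul_ne_zero (pow_ne_zero _ hp.ne_zero) hprod),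
    Nat.factorization_mul (pow_ne_zero _ hp.ne_zero) hprod,
    Nat.factorization_prod fun j _ ↦ pow_ne_zero _ (hq j).ne_zero]
  simp [hp.factorization, (hq _).factorization, Finsupp.single_apply, hpq]
  rw [sum_eq_single i (fun j _ hj ↦ by simp [hinj.ne hj]) (by simp)]
  simp

end EulerForm

theorem eq_pow_of_pow_dvd_of_le_five_mul {ℓ k n : ℕ} (hℓ : ℓ.Prime) (hn : Odd n)
    (hdvd : ℓ ^ k ∣ n) (hle : n ≤ 5 * k) :
    n = ℓ ^ k ∧ (ℓ = 3 ∧ k = 1 ∨ ℓ = 5 ∧ k = 1 ∨ ℓ = 3 ∧ k = 2) := by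
  obtain ⟨c, rfl⟩ := hdvd
  obtain ⟨hℓk, hc⟩ := Nat.odd_mul.mp hn
  have hk : k ≠ 0 := by rintro rfl; have := hc.pos; simp at hle; omega
  have hℓ3 : 3 ≤ ℓ := by
    have := hℓ.two_le
    have : ℓ ≠ 2 := by rintro rfl; exact absurd ((Nat.odd_pow_iff hk).mp hℓk) (by decide)
    omega
  have h3k : 3 ^ k * c ≤ 5 * k := (Nat.mul_le_mul_right c (Nat.pow_le_pow_left hℓ3 k)).trans hle
  have hk2 : k ≤ 2 := by
    by_contra! hk
    have := five_mul_lt_three_pow hk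
    have := Nat.le_mul_of_pos_right (3 ^ k) hc.pos
    omega
  have hc1 : c = 1 := by
    have h2 : 5 * k < 3 ^ k * 3 := by interval_cases k <;> norm_num
    have : c < 3 := Nat.lt_of_mul_lt_mul_left (h3k.trans_lt h2)
    obtain ⟨j, rfl⟩ := hc
    omega
  subst hc1
  refine ⟨mul_one _, ?_⟩
  rcases (by omega : k = 1 ∨ k = 2) with rfl | rfl
  · have : ℓ ≤ 5 := by simpa using hle
    interval_cases ℓ
    · simp
    · norm_num at hℓ
    · simp
  · have : ℓ ≤ 3 := by nlinarith
    exact .inr (.inr ⟨by omega, rfl⟩)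

/-- What `σ N = 2 * N` forces on `N = p ^ α * ∏ qᵢ ^ eᵢ` when `α` is odd and `m ∣ eᵢ + 1` for
all `i`; `Q` is the set of the primes `qᵢ`. -/
structure EulerDivisibility (N p m : ℕ) (Q : Set ℕ) : Prop where
  prime_dvd : ∀ r, r.Prime → r ∣ N → r = p ∨ r ∈ Q
  succ_dvd : p + 1 ∣ 2 * N
  prod_geom_sum_dvd : ∀ T : Finset ℕ, ↑T ⊆ Q → ∏ r ∈ T, ∑ t ∈ range m, r ^ t ∣ 2 * N

theorem EulerDivisibility.of_sigma_eq {ι : Type*} [Fintype ι] {N p α m : ℕ} {q e : ι → ℕ}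
    (hN : N = p ^ α * ∏ i, q i ^ e i) (hperf : σ 1 N = 2 * N) (hp : p.Prime)
    (hq : ∀ i, (q i).Prime) (hinj : Function.Injective q) (hpq : ∀ i, p ≠ q i)
    (hα : 2 ∣ α + 1) (hm : ∀ i, m ∣ e i + 1) :
    EulerDivisibility N p m (Set.range q) := by
  have hσ : σ 1 (p ^ α) * ∏ i, σ 1 (q i ^ e i) = 2 * N := by
    rw [← hperf, hN, sigma_one_pow_mul_prod_pow hp hq hinj hpq]
  refine ⟨fun r hr hrN ↦ ?_, ?_, fun T hT ↦ ?_⟩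
  · rw [hN] at hrN
    rcases hr.dvd_mul.mp hrN with h | h
    · exact .inl ((Nat.prime_dvd_prime_iff_eq hr hp).mp (hr.dvd_of_dvd_pow h))
    · obtain ⟨i, -, hi⟩ := (Prime.dvd_finsetProd_iff hr.prime _).mp h
      exact .inr ⟨i, ((Nat.prime_dvd_prime_iff_eq hr (hq i)).mp (hr.dvd_of_dvd_pow hi)).symm⟩
  · calc p + 1 = ∑ t ∈ range 2, p ^ t := by simp [sum_range_succ, add_comm]
      _ ∣ ∑ t ∈ range (α + 1), p ^ t := geom_sum_dvd_geom_sum_of_dvd p hα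
      _ = σ 1 (p ^ α) := (sigma_one_apply_prime_pow hp).symm
      _ ∣ 2 * N := hσ ▸ dvd_mul_right _ _
  · classical
    rw [← Set.image_univ, subset_set_image_iff] at hT
    obtain ⟨S, -, rfl⟩ := hT
    rw [prod_image hinj.injOn]
    calc ∏ i ∈ S, ∑ t ∈ range m, q i ^ t ∣ ∏ i ∈ S, σ 1 (q i ^ e i) :=
          prod_dvd_prod_of_dvd _ _ fun i _ ↦ (sigma_one_apply_prime_pow (hq i)).symm ▸
            geom_sum_dvd_geom_sum_of_dvd _ (hm i)
      _ ∣ ∏ i, σ 1 (q i ^ e i) := prod_dvd_prod_of_subset _ _ _ (subset_univ S)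
      _ ∣ 2 * N := hσ ▸ dvd_mul_left _ _

namespace EulerDivisibility

variable {N p m : ℕ} {Q : Set ℕ}

theorem dvd_of_dvd_geom_sum (h : EulerDivisibility N p m Q) {r d : ℕ} (hr : r ∈ Q)
    (hd : Odd d) (hdvd : d ∣ ∑ t ∈ range m, r ^ t) : d ∣ N := by
  have := h.prod_geom_sum_dvd {r} (by simpa using hr)
  rw [prod_singleton] at this
  exact hd.coprime_two_right.dvd_of_dvd_mul_left (hdvd.trans this)

theorem eq_or_mem_of_dvd_geom_sum (h : EulerDivisibility N p m Q) {r d : ℕ} (hr : r ∈ Q)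
    (hd : d.Prime := by norm_num) (hd2 : Odd d := by decide)
    (hdvd : d ∣ ∑ t ∈ range m, r ^ t := by decide) : d = p ∨ d ∈ Q :=
  h.prime_dvd d hd (h.dvd_of_dvd_geom_sum hr hd2 hdvd)

theorem mem_of_dvd_succ (h : EulerDivisibility N p m Q) {d : ℕ} (hd : d.Prime := by norm_num)
    (hd2 : Odd d := by decide) (hdvd : d ∣ p + 1 := by norm_num) : d ∈ Q := by
  refine (h.prime_dvd d hd (hd2.coprime_two_right.dvd_of_dvd_mul_left
    (hdvd.trans h.succ_dvd))).resolve_left ?_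
  rintro rfl
  exact hd.not_dvd_one ((Nat.dvd_add_right dvd_rfl).mp hdvd)

theorem pow_dvd_of_le_mul_card {ℓ k c : ℕ} (h : EulerDivisibility N p (ℓ ^ k) Q) (hℓ : Odd ℓ)
    (T : Finset ℕ) (hT : ↑T ⊆ Q) (hT1 : ∀ r ∈ T, r ≡ 1 [MOD ℓ]) (hc : c ≤ k * #T) :
    ℓ ^ c ∣ N := by
  refine (pow_dvd_pow ℓ hc).trans ((hℓ.pow.coprime_two_right).dvd_of_dvd_mul_left ?_)
  calc ℓ ^ (k * #T) = ∏ _r ∈ T, ℓ ^ k := by rw [prod_const, pow_mul]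
    _ ∣ ∏ r ∈ T, ∑ t ∈ range (ℓ ^ k), r ^ t :=
        prod_dvd_prod_of_dvd _ _ fun r hr ↦ pow_dvd_geom_sum_of_modEq_one (hT1 r hr) k
    _ ∣ 2 * N := h.prod_geom_sum_dvd T hT

theorem three_pow_three_dvd (h : EulerDivisibility N p 3 Q) (h3 : 3 ∈ Q) : 3 ^ 3 ∣ N := by
  have h' : EulerDivisibility N p (3 ^ 1) Q := h
  rcases h.eq_or_mem_of_dvd_geom_sum (d := 13) h3 with rfl | h13
  · have h7 := h.mem_of_dvd_succ (d := 7)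
    have h19 := (h.eq_or_mem_of_dvd_geom_sum (d := 19) h7).resolve_left (by norm_num)
    have h127 := (h.eq_or_mem_of_dvd_geom_sum (d := 127) h19).resolve_left (by norm_num)
    exact h'.pow_dvd_of_le_mul_card (by decide) {7, 19, 127}
      (by simp [Set.insert_subset_iff, *]) (by decide) (by decide)
  rcases h.eq_or_mem_of_dvd_geom_sum (d := 61) h13 with rfl | h61
  · have h31 := h.mem_of_dvd_succ (d := 31)
    have h331 := (h.eq_or_mem_of_dvd_geom_sum (d := 331) h31).resolve_left (by norm_num)
    exact h'.pow_dvd_of_le_mul_card (by decide) {13, 31, 331}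
      (by simp [Set.insert_subset_iff, *]) (by decide) (by decide)
  rcases h.eq_or_mem_of_dvd_geom_sum (d := 97) h61 with rfl | h97
  · have h7 := h.mem_of_dvd_succ (d := 7)
    exact h'.pow_dvd_of_le_mul_card (by decide) {13, 61, 7}
      (by simp [Set.insert_subset_iff, *]) (by decide) (by decide)
  · exact h'.pow_dvd_of_le_mul_card (by decide) {13, 61, 97}
      (by simp [Set.insert_subset_iff, *]) (by decide) (by decide)

theorem five_pow_five_dvd (h : EulerDivisibility N p 5 Q) (hp4 : p % 4 = 1) (h5 : 5 ∈ Q) :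
    5 ^ 5 ∣ N := by
  have h' : EulerDivisibility N p (5 ^ 1) Q := h
  have h11 := (h.eq_or_mem_of_dvd_geom_sum (d := 11) h5).resolve_left (by omega)
  have h71 := (h.eq_or_mem_of_dvd_geom_sum (d := 71) h5).resolve_left (by omega)
  have h211 := (h.eq_or_mem_of_dvd_geom_sum (d := 211) h71).resolve_left (by omega)
  have h2221 := h.eq_or_mem_of_dvd_geom_sum (d := 2221) h71
  have h3221 := h.eq_or_mem_of_dvd_geom_sum (d := 3221) h11
  have h1361 := h.eq_or_mem_of_dvd_geom_sum (d := 1361) h211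
  rcases h2221 with rfl | h2221
  · norm_num at h3221 h1361
    exact h'.pow_dvd_of_le_mul_card (by decide) {11, 71, 211, 3221, 1361}
      (by simp [Set.insert_subset_iff, *]) (by decide) (by decide)
  rcases h3221 with rfl | h3221
  · norm_num at h1361
    exact h'.pow_dvd_of_le_mul_card (by decide) {11, 71, 211, 2221, 1361}
      (by simp [Set.insert_subset_iff, *]) (by decide) (by decide)
  · exact h'.pow_dvd_of_le_mul_card (by decide) {11, 71, 211, 2221, 3221}
      (by simp [Set.insert_subset_iff, *]) (by decide) (by decide)

theorem three_pow_nine_dvd (h : EulerDivisibility N p 9 Q) (hp4 : p % 4 = 1) (h3 : 3 ∈ Q) :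
    3 ^ 9 ∣ N := by
  have h' : EulerDivisibility N p (3 ^ 2) Q := h
  have h757 := h.eq_or_mem_of_dvd_geom_sum (d := 757) h3
  rcases h.eq_or_mem_of_dvd_geom_sum (d := 13) h3 with rfl | h13
  · have h7 := h.mem_of_dvd_succ (d := 7)
    have h19 := (h.eq_or_mem_of_dvd_geom_sum (d := 19) h7).resolve_left (by norm_num)
    have h37 := (h.eq_or_mem_of_dvd_geom_sum (d := 37) h7).resolve_left (by norm_num)
    have h1063 := (h.eq_or_mem_of_dvd_geom_sum (d := 1063) h7).resolve_left (by norm_num)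
    norm_num at h757
    exact h'.pow_dvd_of_le_mul_card (by decide) {7, 19, 37, 1063, 757}
      (by simp [Set.insert_subset_iff, *]) (by decide) (by decide)
  rcases h.eq_or_mem_of_dvd_geom_sum (d := 61) h13 with rfl | h61
  · have h31 := h.mem_of_dvd_succ (d := 31)
    have h331 := (h.eq_or_mem_of_dvd_geom_sum (d := 331) h31).resolve_left (by norm_num)
    have h3637 := (h.eq_or_mem_of_dvd_geom_sum (d := 3637) h31).resolve_left (by norm_num)
    norm_num at h757
    exact h'.pow_dvd_of_le_mul_card (by decide) {13, 31, 331, 3637, 757}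
      (by simp [Set.insert_subset_iff, *]) (by decide) (by decide)
  · have h19 := (h.eq_or_mem_of_dvd_geom_sum (d := 19) h61).resolve_left (by omega)
    have h127 := (h.eq_or_mem_of_dvd_geom_sum (d := 127) h19).resolve_left (by omega)
    have h523 := (h.eq_or_mem_of_dvd_geom_sum (d := 523) h19).resolve_left (by omega)
    exact h'.pow_dvd_of_le_mul_card (by decide) {13, 61, 19, 127, 523}
      (by simp [Set.insert_subset_iff, *]) (by decide) (by decide)

end EulerDivisibility

theorem ell_ne_qi_general
    (N p α s : ℕ) (q β : Fin s → ℕ)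
    (hN : N = p ^ α * ∏ i, q i ^ (2 * β i))
    (hperf : ArithmeticFunction.sigma 1 N = 2 * N)
    (hp : p.Prime)
    (hq : ∀ i, (q i).Prime)
    (hinj : Function.Injective q)
    (hpq : ∀ i, p ≠ q i)
    (hα4 : α % 4 = 1) (hp4 : p % 4 = 1)
    (ℓ k : ℕ)
    (hdvd : ∀ i, ℓ ^ k ∣ 2 * β i + 1)
    (hnd : ¬ ℓ ^ (5 * k) ∣ N) :
    ∀ i, ℓ ≠ q i := by
  rintro i rfl
  have h := EulerDivisibility.of_sigma_eq hN hperf hp hq hinj hpq (by omega) hdvd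
  have hmem : q i ∈ Set.range q := ⟨i, rfl⟩
  have hle : 2 * β i + 1 ≤ 5 * k := by
    by_contra! hlt
    exact hnd <| (pow_dvd_pow _ (by omega)).trans <|
      hN ▸ dvd_mul_of_dvd_right (dvd_prod_of_mem _ (mem_univ i)) _
  have hnot := hN ▸ not_pow_succ_dvd_pow_mul_prod_pow hp hq hinj hpq i
  obtain ⟨hβ, hcases⟩ :=
    eq_pow_of_pow_dvd_of_le_five_mul (hq i) (odd_two_mul_add_one _) (hdvd i) hle
  rw [hβ] at hnot
  rcases hcases with ⟨hqi, rfl⟩ | ⟨hqi, rfl⟩ | ⟨hqi, rfl⟩ <;> rw [hqi] at h hmem hnot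
  · exact hnot (h.three_pow_three_dvd hmem)
  · exact hnot (h.five_pow_five_dvd hp4 hmem)
  · exact hnot (h.three_pow_nine_dvd hp4 hmem)

theorem ell_ne_qi
    (N p α s : ℕ) (q β : Fin s → ℕ)
    (hN : N = p ^ α * ∏ i, q i ^ (2 * β i))
    (hodd : Odd N)
    (hperf : ArithmeticFunction.sigma 1 N = 2 * N)
    (hp : p.Prime) (hpodd : Odd p)
    (hq : ∀ i, (q i).Prime) (hqodd : ∀ i, Odd (q i))
    (hinj : Function.Injective q)
    (hpq : ∀ i, p ≠ q i)
    (hα4 : α % 4 = 1) (hp4 : p % 4 = 1)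
    (hαpos : 0 < α) (hβpos : ∀ i, 0 < β i)
    (ℓ k : ℕ) (hℓ : ℓ.Prime) (hkpos : 0 < k)
    (hdvd : ∀ i, ℓ ^ k ∣ 2 * β i + 1)
    (hnd : ¬ ℓ ^ (5 * k) ∣ N) :
    ∀ i, ℓ ≠ q i :=
  ell_ne_qi_general N p α s q β hN hperf hp hq hinj hpq hα4 hp4 ℓ k hdvd hnd
end

section
/- Let N be an odd perfect number written in Euler form N = p^α · q_1^{2β_1} · … · q_{r-1}^{2β_{r-1}}, let ℓ be a prime and k a positive integer with k ≠ 2. If ℓ^k divides 2β_i + 1 for every i = 1, …, r−1 but ℓ^{5k} does not divide N, then ℓ ≠ p. -/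
/-!
Suppose `ℓ = p`. As `p ∤ σ(p^α)` and `p ≠ 2`, comparing `p`-adic valuations in `σ(N) = 2N` gives
`α = ∑ᵢ v_p(σ(q_i^{2β_i}))`. Let `S` be the set of `i` with `p ∣ q_i - 1`. Lifting the exponent,
`v_p(σ(q_i^{2β_i})) = v_p(2β_i + 1) ≥ k` for `i ∈ S`, while for `i ∉ S` it is either `0` or
larger than `v_p(2β_i + 1) ≥ k`.

If `p^(j+1) ∣ 2β_i + 1`, then `∑_{t<p} q_i^(t p^j)` exceeds `p` and is not divisible by `p²`, so it
has a prime factor `r ≠ p`, modulo which `q_i` has order exactly `p^(j+1)`. Then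
`r ∣ σ(q_i^{2β_i}) ∣ 2N` forces `r = q_m` with `m ∈ S ∖ {i}`, and distinct `j` give distinct orders.
Hence `v_p(2β_i + 1) ≤ |S| - 1` for every `i`, and `S ≠ ∅`. So `k(k+1) ≤ k|S| ≤ α < 5k`, leaving
`k ∈ {1, 3}`; both contradict `α ≡ 1 (mod 4)`, using `|S|(|S| - 1)` as an upper bound for the
contribution of `S`.
-/

open Finset ArithmeticFunction
open scoped ArithmeticFunction.sigma

lemma natCast_eq_one_iff_dvd_sub_one {m a : ℕ} (ha : 1 ≤ a) : (a : ZMod m) = 1 ↔ m ∣ a - 1 := by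
  rw [← ZMod.natCast_eq_zero_iff, Nat.cast_sub ha, Nat.cast_one, sub_eq_zero]

lemma exists_prime_ne_dvd_of_not_sq_dvd {ℓ E : ℕ} (hℓ : ℓ ≠ 0) (hℓE : ℓ < E)
    (h : ¬ ℓ ^ 2 ∣ E) : ∃ r, r.Prime ∧ r ∣ E ∧ r ≠ ℓ := by
  by_contra! hE
  obtain ⟨t, hEt⟩ : ∃ t, E = ℓ ^ t :=
    ⟨_, Nat.eq_prime_pow_of_unique_prime_dvd (by omega) (hE _ · ·)⟩
  subst hEt
  rcases Nat.lt_or_ge t 2 with ht | ht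
  · interval_cases t <;> simp_all
  · exact h (pow_dvd_pow ℓ ht)

lemma orderOf_dvd_sub_one {r a : ℕ} [Fact r.Prime] (h : orderOf (a : ZMod r) ≠ 0) :
    orderOf (a : ZMod r) ∣ r - 1 :=
  ZMod.orderOf_dvd_card_sub_one fun h0 => h (by rw [h0, orderOf_zero])

lemma dvd_geom_sum_of_orderOf_dvd {r a n : ℕ} [Fact r.Prime] (h : orderOf (a : ZMod r) ∣ n)
    (h1 : orderOf (a : ZMod r) ≠ 1) : r ∣ ∑ i ∈ range n, a ^ i := by
  have ha : (a : ZMod r) - 1 ≠ 0 := sub_ne_zero.mpr (mt orderOf_eq_one_iff.mpr h1)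
  have hgeom := geom_sum_mul (a : ZMod r) n
  rw [orderOf_dvd_iff_pow_eq_one.mp h, sub_self, mul_eq_zero] at hgeom
  rw [← ZMod.natCast_eq_zero_iff]
  push_cast
  exact hgeom.resolve_right ha

section

variable {ℓ : ℕ} [hℓ : Fact ℓ.Prime]

lemma padicValNat_finset_prod {ι : Type*} {s : Finset ι} {f : ι → ℕ} (hf : ∀ i ∈ s, f i ≠ 0) :
    padicValNat ℓ (∏ i ∈ s, f i) = ∑ i ∈ s, padicValNat ℓ (f i) := by
  simp only [← Nat.factorization_def _ hℓ.out, Nat.factorization_prod hf, Finsupp.finsetSum_apply]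

lemma padicValNat_pow_sub_one_eq_add {x : ℕ} (hx : 1 < x) {n : ℕ} (hn : n ≠ 0) :
    padicValNat ℓ (x ^ n - 1) = padicValNat ℓ (x - 1) + padicValNat ℓ (∑ i ∈ range n, x ^ i) := by
  have hsum : ∑ i ∈ range n, x ^ i ≠ 0 :=
    (sum_pos (fun i _ => by positivity) (nonempty_range_iff.mpr hn)).ne'
  rw [← geom_sum_mul_of_one_le hx.le, mul_comm, padicValNat.mul (by omega) hsum]

lemma padicValNat_geom_sum_of_dvd_sub_one (hℓodd : Odd ℓ) {x : ℕ} (hx : 1 < x) (hℓx : ℓ ∣ x - 1)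
    {n : ℕ} (hn : n ≠ 0) : padicValNat ℓ (∑ i ∈ range n, x ^ i) = padicValNat ℓ n := by
  have hℓx' : ¬ ℓ ∣ x := fun h => by
    have := Nat.dvd_sub h hℓx
    rw [Nat.sub_sub_self hx.le, Nat.dvd_one] at this
    exact hℓ.out.ne_one this
  have := padicValNat.pow_sub_pow hℓodd hx (by simpa using hℓx) hℓx' hn
  rw [one_pow, padicValNat_pow_sub_one_eq_add hx hn] at this
  omega

lemma padicValNat_lt_padicValNat_pow_sub_one (hℓodd : Odd ℓ) {x n : ℕ} (hx : 1 < x) (hn : n ≠ 0)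
    (h : ℓ ∣ x ^ n - 1) : padicValNat ℓ n < padicValNat ℓ (x ^ n - 1) := by
  have hxn : (x : ZMod ℓ) ^ n = 1 := by
    exact_mod_cast (natCast_eq_one_iff_dvd_sub_one (Nat.one_le_pow _ _ (by omega))).mpr h
  have hx0 : (x : ZMod ℓ) ≠ 0 := fun h0 => by simp [h0, zero_pow hn] at hxn
  set d := orderOf (x : ZMod ℓ)
  obtain ⟨c, rfl⟩ : d ∣ n := orderOf_dvd_of_pow_eq_one hxn
  have hdℓ : d ∣ ℓ - 1 := ZMod.orderOf_dvd_card_sub_one hx0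
  have hd0 : d ≠ 0 := by rintro h0; simp [h0] at hn
  have hc0 : c ≠ 0 := by rintro rfl; simp at hn
  have hℓd : ¬ ℓ ∣ d := fun h => by
    have := Nat.le_of_dvd (Nat.pos_of_ne_zero hd0) h
    have := Nat.le_of_dvd (by have := hℓ.out.two_le; omega) hdℓ
    omega
  have hxd : ℓ ∣ x ^ d - 1 :=
    (natCast_eq_one_iff_dvd_sub_one (Nat.one_le_pow _ _ (by omega))).mp
      (by exact_mod_cast pow_orderOf_eq_one (x : ZMod ℓ))
  have hlte := padicValNat.pow_sub_pow hℓodd (Nat.one_lt_pow hd0 hx) (by simpa using hxd)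
    (fun h' => hx0 ((ZMod.natCast_eq_zero_iff _ _).mpr (hℓ.out.dvd_of_dvd_pow h'))) hc0
  rw [one_pow, ← pow_mul] at hlte
  rw [hlte, padicValNat.mul hd0 hc0, padicValNat.eq_zero_of_not_dvd hℓd]
  have : 1 ≤ padicValNat ℓ (x ^ d - 1) :=
    one_le_padicValNat_of_dvd (by have := Nat.one_lt_pow hd0 hx; omega) hxd
  omega

lemma padicValNat_lt_padicValNat_geom_sum (hℓodd : Odd ℓ) {x : ℕ} (hx : 1 < x) (hℓx : ¬ ℓ ∣ x - 1)
    {n : ℕ} (hn : n ≠ 0) (h : ℓ ∣ ∑ i ∈ range n, x ^ i) :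
    padicValNat ℓ n < padicValNat ℓ (∑ i ∈ range n, x ^ i) := by
  have hdvd : ℓ ∣ x ^ n - 1 := by
    rw [← geom_sum_mul_of_one_le hx.le]; exact h.mul_right _
  have := padicValNat_lt_padicValNat_pow_sub_one hℓodd hx hn hdvd
  rwa [padicValNat_pow_sub_one_eq_add hx hn, padicValNat.eq_zero_of_not_dvd hℓx, zero_add] at this

lemma not_sq_dvd_geom_sum (hℓodd : Odd ℓ) {x : ℕ} (hx : 1 < x) :
    ¬ ℓ ^ 2 ∣ ∑ i ∈ range ℓ, x ^ i := by
  by_cases hℓx : ℓ ∣ x - 1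
  · have hsum : ∑ i ∈ range ℓ, x ^ i ≠ 0 :=
      (sum_pos (fun i _ => by positivity) (nonempty_range_iff.mpr hℓ.out.ne_zero)).ne'
    rw [padicValNat_dvd_iff_le hsum,
      padicValNat_geom_sum_of_dvd_sub_one hℓodd hx hℓx hℓ.out.ne_zero, padicValNat_self]
    omega
  · -- by Fermat, `(∑ i < ℓ, x ^ i) * (x - 1) = x ^ ℓ - 1 = x - 1 ≠ 0` in `ZMod ℓ`
    intro h
    have hsum : ((∑ i ∈ range ℓ, x ^ i : ℕ) : ZMod ℓ) = 0 :=
      (ZMod.natCast_eq_zero_iff _ _).mpr ((dvd_pow_self ℓ two_ne_zero).trans h)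
    have hx1 : (x : ZMod ℓ) - 1 ≠ 0 :=
      sub_ne_zero.mpr (mt (natCast_eq_one_iff_dvd_sub_one (by omega)).mp hℓx)
    have hgeom := geom_sum_mul (x : ZMod ℓ) ℓ
    push_cast at hsum
    rw [hsum, zero_mul, ZMod.pow_card] at hgeom
    exact hx1 hgeom.symm

lemma exists_prime_orderOf_eq_pow_succ (hℓodd : Odd ℓ) {a : ℕ} (ha : 1 < a) (j : ℕ) :
    ∃ r, r.Prime ∧ orderOf (a : ZMod r) = ℓ ^ (j + 1) := by
  set x := a ^ ℓ ^ j
  have hx : 1 < x := Nat.one_lt_pow (pow_ne_zero _ hℓ.out.ne_zero) ha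
  have hℓE : ℓ < ∑ i ∈ range ℓ, x ^ i :=
    calc ℓ = ∑ i ∈ range ℓ, 1 := by simp
      _ < ∑ i ∈ range ℓ, x ^ i := sum_lt_sum (fun i _ => Nat.one_le_pow _ _ (by omega))
          ⟨1, mem_range.mpr hℓ.out.one_lt, by simpa⟩
  obtain ⟨r, hr, hrE, hrℓ⟩ :=
    exists_prime_ne_dvd_of_not_sq_dvd hℓ.out.ne_zero hℓE (not_sq_dvd_geom_sum hℓodd hx)
  have : Fact r.Prime := ⟨hr⟩
  have hE : ∑ i ∈ range ℓ, ((a : ZMod r) ^ ℓ ^ j) ^ i = 0 := by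
    exact_mod_cast (ZMod.natCast_eq_zero_iff _ _).mpr hrE
  refine ⟨r, hr, orderOf_eq_prime_pow (fun h1 => ?_) ?_⟩
  · -- if `x ≡ 1 (mod r)`, the sum is `≡ ℓ`
    rw [h1] at hE
    simp only [one_pow, sum_const, card_range, nsmul_eq_mul, mul_one] at hE
    exact hrℓ ((Nat.prime_dvd_prime_iff_eq hr hℓ.out).mp ((ZMod.natCast_eq_zero_iff _ _).mp hE))
  · have hgeom := geom_sum_mul ((a : ZMod r) ^ ℓ ^ j) ℓ
    rwa [hE, zero_mul, eq_comm, sub_eq_zero, ← pow_mul, ← pow_succ] at hgeom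

lemma padicValNat_sigma_one_prime_pow_of_dvd_sub_one (hℓodd : Odd ℓ) {q : ℕ} (hq : q.Prime)
    (h : ℓ ∣ q - 1) (e : ℕ) : padicValNat ℓ (σ 1 (q ^ e)) = padicValNat ℓ (e + 1) := by
  rw [sigma_one_apply_prime_pow hq,
    padicValNat_geom_sum_of_dvd_sub_one hℓodd hq.one_lt h e.succ_ne_zero]

lemma padicValNat_sigma_one_prime_pow_eq_zero_or_lt (hℓodd : Odd ℓ) {q : ℕ} (hq : q.Prime)
    (h : ¬ ℓ ∣ q - 1) (e : ℕ) :
    padicValNat ℓ (σ 1 (q ^ e)) = 0 ∨ padicValNat ℓ (e + 1) < padicValNat ℓ (σ 1 (q ^ e)) := by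
  rw [sigma_one_apply_prime_pow hq]
  by_cases hd : ℓ ∣ ∑ i ∈ range (e + 1), q ^ i
  · exact .inr (padicValNat_lt_padicValNat_geom_sum hℓodd hq.one_lt h e.succ_ne_zero hd)
  · exact .inl (padicValNat.eq_zero_of_not_dvd hd)

end

lemma not_dvd_sigma_one_prime_pow {p : ℕ} (hp : p.Prime) (α : ℕ) : ¬ p ∣ σ 1 (p ^ α) := by
  have : Fact p.Prime := ⟨hp⟩
  rw [sigma_one_apply_prime_pow hp, ← ZMod.natCast_eq_zero_iff]
  simp [sum_range_succ']

section EulerForm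

variable {ι : Type*} [Fintype ι] {p : ℕ} {q : ι → ℕ}

lemma coprime_pow_prod_pow (hp : p.Prime) (hq : ∀ i, (q i).Prime) (hpq : ∀ i, p ≠ q i)
    (α : ℕ) (e : ι → ℕ) : Nat.Coprime (p ^ α) (∏ i, q i ^ e i) :=
  Nat.Coprime.prod_right fun i _ =>
    Nat.Coprime.pow _ _ ((Nat.coprime_primes hp (hq i)).mpr (hpq i))

lemma ArithmeticFunction.IsMultiplicative.map_pow_mul_prod_pow {R : Type*} [CommMonoidWithZero R]
    {f : ArithmeticFunction R} (hf : f.IsMultiplicative) (hp : p.Prime) (hq : ∀ i, (q i).Prime)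
    (hinj : Function.Injective q) (hpq : ∀ i, p ≠ q i) (α : ℕ) (e : ι → ℕ) :
    f (p ^ α * ∏ i, q i ^ e i) = f (p ^ α) * ∏ i, f (q i ^ e i) := by
  rw [hf.map_mul_of_coprime (coprime_pow_prod_pow hp hq hpq α e), hf.map_prod _ _ fun i _ j _ hij =>
    Nat.Coprime.pow _ _ ((Nat.coprime_primes (hq i) (hq j)).mpr (hinj.ne hij))]

lemma padicValNat_pow_mul_prod_pow (hp : p.Prime) (hq : ∀ i, (q i).Prime) (hpq : ∀ i, p ≠ q i)
    (α : ℕ) (e : ι → ℕ) : padicValNat p (p ^ α * ∏ i, q i ^ e i) = α := by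
  have : Fact p.Prime := ⟨hp⟩
  have hprod : ∏ i, q i ^ e i ≠ 0 := prod_ne_zero_iff.mpr fun i _ => pow_ne_zero _ (hq i).ne_zero
  rw [padicValNat.mul (pow_ne_zero _ hp.ne_zero) hprod, padicValNat.prime_pow,
    padicValNat.eq_zero_of_not_dvd, add_zero]
  exact fun h => Nat.not_coprime_of_dvd_of_dvd hp.one_lt (dvd_refl p) h
    (Nat.Coprime.coprime_dvd_left (dvd_pow_self p one_ne_zero) (coprime_pow_prod_pow hp hq hpq 1 e))

lemma eq_or_exists_eq_of_prime_dvd_pow_mul_prod_pow (hp : p.Prime) (hq : ∀ i, (q i).Prime)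
    {α : ℕ} {e : ι → ℕ} {r : ℕ} (hr : r.Prime) (h : r ∣ p ^ α * ∏ i, q i ^ e i) :
    r = p ∨ ∃ i, r = q i := by
  rcases hr.dvd_mul.mp h with h | h
  · exact .inl ((Nat.prime_dvd_prime_iff_eq hr hp).mp (hr.dvd_of_dvd_pow h))
  · obtain ⟨i, -, hi⟩ := hr.prime.exists_mem_finset_dvd h
    exact .inr ⟨i, (Nat.prime_dvd_prime_iff_eq hr (hq i)).mp (hr.dvd_of_dvd_pow hi)⟩

end EulerForm

lemma sum_eq_zero_or_le_sum {ι : Type*} {s : Finset ι} {f : ι → ℕ} {k : ℕ}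
    (h : ∀ i ∈ s, f i = 0 ∨ k ≤ f i) : ∑ i ∈ s, f i = 0 ∨ k ≤ ∑ i ∈ s, f i := by
  by_cases h0 : ∀ i ∈ s, f i = 0
  · exact .inl (sum_eq_zero h0)
  · push Not at h0
    obtain ⟨i, hi, hfi⟩ := h0
    exact .inr (((h i hi).resolve_left hfi).trans (single_le_sum (fun _ _ => Nat.zero_le _) hi))

lemma eq_two_of_exponent_bounds {α k c A R : ℕ} (hα : α % 4 = 1) (hαk : α < 5 * k)
    (hαAR : α = A + R) (hkc : k + 1 ≤ c) (hA : k * c ≤ A) (hA' : A ≤ c * (c - 1))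
    (hR : R = 0 ∨ k ≤ R) : k = 2 := by
  have hc : c < 5 := by
    by_contra! h
    nlinarith
  have hk : k ≤ 3 := by omega
  interval_cases k <;> interval_cases c <;> omega

section OddPerfect

variable {ι : Type*} [Fintype ι] {N p α : ℕ} {q e : ι → ℕ}

lemma sum_padicValNat_sigma_one_eq (hN : N = p ^ α * ∏ i, q i ^ e i) (hperf : σ 1 N = 2 * N)
    (hp : p.Prime) (hpodd : Odd p) (hq : ∀ i, (q i).Prime) (hinj : Function.Injective q)
    (hpq : ∀ i, p ≠ q i) : ∑ i, padicValNat p (σ 1 (q i ^ e i)) = α := by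
  have : Fact p.Prime := ⟨hp⟩
  have hσ : ∀ i ∈ univ, σ 1 (q i ^ e i) ≠ 0 :=
    fun i _ => (sigma_pos 1 _ (pow_ne_zero _ (hq i).ne_zero)).ne'
  have hN0 : N ≠ 0 := by
    rw [hN]
    exact mul_ne_zero (pow_ne_zero _ hp.ne_zero)
      (prod_ne_zero_iff.mpr fun i _ => pow_ne_zero _ (hq i).ne_zero)
  calc ∑ i, padicValNat p (σ 1 (q i ^ e i))
      = padicValNat p (σ 1 (p ^ α)) + padicValNat p (∏ i, σ 1 (q i ^ e i)) := by
        rw [padicValNat.eq_zero_of_not_dvd (not_dvd_sigma_one_prime_pow hp α), zero_add,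
          padicValNat_finset_prod hσ]
    _ = padicValNat p (σ 1 N) := by
        rw [hN, isMultiplicative_sigma.map_pow_mul_prod_pow hp hq hinj hpq,
          padicValNat.mul (sigma_pos 1 _ (pow_ne_zero _ hp.ne_zero)).ne' (prod_ne_zero_iff.mpr hσ)]
    _ = padicValNat p N := by
        rw [hperf, padicValNat.mul two_ne_zero hN0,
          padicValNat.eq_zero_of_not_dvd
            (hp.coprime_iff_not_dvd.mp (Nat.coprime_two_right.mpr hpodd)), zero_add]
    _ = α := hN ▸ padicValNat_pow_mul_prod_pow hp hq hpq α e

lemma exists_orderOf_eq_pow_succ_of_pow_succ_dvd (hN : N = p ^ α * ∏ i, q i ^ e i)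
    (hperf : σ 1 N = 2 * N) (hp : p.Prime) (hpodd : Odd p) (hq : ∀ i, (q i).Prime)
    (hinj : Function.Injective q) (hpq : ∀ i, p ≠ q i) {i : ι} {j : ℕ}
    (hj : p ^ (j + 1) ∣ e i + 1) : ∃ m, orderOf (q i : ZMod (q m)) = p ^ (j + 1) := by
  have : Fact p.Prime := ⟨hp⟩
  obtain ⟨r, hr, hord⟩ := exists_prime_orderOf_eq_pow_succ hpodd (hq i).one_lt j
  have : Fact r.Prime := ⟨hr⟩
  have hpr : p < r := by
    have hdvd : p ^ (j + 1) ∣ r - 1 :=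
      hord ▸ orderOf_dvd_sub_one (by rw [hord]; exact pow_ne_zero _ hp.ne_zero)
    have := hr.two_le
    have := Nat.le_of_dvd (by omega) hdvd
    have := Nat.le_self_pow j.add_one_ne_zero p
    omega
  have hrσ : r ∣ σ 1 (q i ^ e i) := by
    rw [sigma_one_apply_prime_pow (hq i)]
    exact dvd_geom_sum_of_orderOf_dvd (hord ▸ hj)
      (hord ▸ (Nat.one_lt_pow j.add_one_ne_zero hp.one_lt).ne')
  have hrN : r ∣ N := by
    have hr2 : Nat.Coprime r 2 := (Nat.coprime_primes hr Nat.prime_two).mpr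
      (by have := hp.two_le; omega)
    refine hr2.dvd_of_dvd_mul_left ?_
    rw [← hperf, hN, isMultiplicative_sigma.map_pow_mul_prod_pow hp hq hinj hpq]
    exact hrσ.trans ((dvd_prod_of_mem (fun m => σ 1 (q m ^ e m)) (mem_univ i)).trans
      (dvd_mul_left _ _))
  rw [hN] at hrN
  obtain hrp | ⟨m, rfl⟩ := eq_or_exists_eq_of_prime_dvd_pow_mul_prod_pow hp hq hr hrN
  · omega
  · exact ⟨m, hord⟩

lemma le_card_erase_of_pow_dvd [DecidableEq ι] (hN : N = p ^ α * ∏ i, q i ^ e i)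
    (hperf : σ 1 N = 2 * N) (hp : p.Prime) (hpodd : Odd p) (hq : ∀ i, (q i).Prime)
    (hinj : Function.Injective q) (hpq : ∀ i, p ≠ q i) {i : ι} {T : ℕ} (hT : p ^ T ∣ e i + 1) :
    T ≤ #((univ.filter fun m => p ∣ q m - 1).erase i) := by
  calc T = #((range T).image fun j => p ^ (j + 1)) := by
        rw [card_image_of_injective _ fun a b h => by
          simpa using Nat.pow_right_injective hp.two_le h, card_range]
    _ ≤ #(((univ.filter fun m => p ∣ q m - 1).erase i).image
          fun m => orderOf (q i : ZMod (q m))) := card_le_card ?_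
    _ ≤ _ := card_image_le
  intro x hx
  obtain ⟨j, hj, rfl⟩ := mem_image.mp hx
  obtain ⟨m, hm⟩ := exists_orderOf_eq_pow_succ_of_pow_succ_dvd hN hperf hp hpodd hq hinj hpq
    ((pow_dvd_pow p (mem_range.mp hj)).trans hT)
  have : Fact (q m).Prime := ⟨hq m⟩
  have hm0 : orderOf (q i : ZMod (q m)) ≠ 0 := hm ▸ pow_ne_zero _ hp.ne_zero
  refine mem_image.mpr ⟨m, mem_erase.mpr ⟨?_, mem_filter.mpr ⟨mem_univ m, ?_⟩⟩, hm⟩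
  · rintro rfl
    simp [orderOf_zero] at hm0
  · exact (dvd_pow_self p (Nat.succ_ne_zero j)).trans (hm ▸ orderOf_dvd_sub_one hm0)

lemma succ_le_card_filter_dvd_sub_one [DecidableEq ι] [Nonempty ι]
    (hN : N = p ^ α * ∏ i, q i ^ e i) (hperf : σ 1 N = 2 * N) (hp : p.Prime) (hpodd : Odd p)
    (hq : ∀ i, (q i).Prime) (hinj : Function.Injective q) (hpq : ∀ i, p ≠ q i) {k : ℕ}
    (hk : 0 < k) (hdvd : ∀ i, p ^ k ∣ e i + 1) :
    k + 1 ≤ #(univ.filter fun m => p ∣ q m - 1) := by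
  obtain ⟨i⟩ := ‹Nonempty ι›
  obtain ⟨m, hm⟩ : (univ.filter fun m => p ∣ q m - 1).Nonempty :=
    (card_pos.mp ((le_card_erase_of_pow_dvd hN hperf hp hpodd hq hinj hpq (hdvd i)).trans_lt'
      hk)).mono (erase_subset _ _)
  have := le_card_erase_of_pow_dvd hN hperf hp hpodd hq hinj hpq (hdvd m)
  rw [card_erase_of_mem hm] at this
  omega

end OddPerfect

theorem ell_ne_p_of_k_ne_two_general
    (N p α s : ℕ) (q β : Fin s → ℕ)
    (hN : N = p ^ α * ∏ i, q i ^ (2 * β i))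
    (hperf : ArithmeticFunction.sigma 1 N = 2 * N)
    (hp : p.Prime) (hpodd : Odd p)
    (hq : ∀ i, (q i).Prime)
    (hinj : Function.Injective q)
    (hpq : ∀ i, p ≠ q i)
    (hα4 : α % 4 = 1)
    (ℓ k : ℕ) (hk2 : k ≠ 2)
    (hdvd : ∀ i, ℓ ^ k ∣ 2 * β i + 1)
    (hnd : ¬ ℓ ^ (5 * k) ∣ N) :
    ℓ ≠ p := by
  rintro rfl
  have : Fact ℓ.Prime := ⟨hp⟩
  set S := univ.filter fun m => ℓ ∣ q m - 1
  set v := fun i => padicValNat ℓ (σ 1 (q i ^ (2 * β i)))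
  have hsum : ∑ i, v i = α := sum_padicValNat_sigma_one_eq hN hperf hp hpodd hq hinj hpq
  have hαk : α < 5 * k := by
    by_contra! h
    exact hnd ((pow_dvd_pow ℓ h).trans (hN ▸ dvd_mul_right _ _))
  have hk : ∀ i, k ≤ padicValNat ℓ (2 * β i + 1) :=
    fun i => (padicValNat_dvd_iff_le (by omega)).mp (hdvd i)
  obtain ⟨i₀, -, -⟩ := exists_ne_zero_of_sum_ne_zero (hsum ▸ (by omega : α ≠ 0))
  have : Nonempty (Fin s) := ⟨i₀⟩
  have hkS : k + 1 ≤ #S :=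
    succ_le_card_filter_dvd_sub_one hN hperf hp hpodd hq hinj hpq (by omega) hdvd
  have hvS : ∀ i ∈ S, k ≤ v i ∧ v i ≤ #S - 1 := fun i hi => by
    dsimp only [v]
    rw [padicValNat_sigma_one_prime_pow_of_dvd_sub_one hpodd (hq i) (mem_filter.mp hi).2,
      ← card_erase_of_mem hi]
    exact ⟨hk i, le_card_erase_of_pow_dvd hN hperf hp hpodd hq hinj hpq pow_padicValNat_dvd⟩
  have hvSc : ∀ i ∈ univ.filter fun m => ¬ ℓ ∣ q m - 1, v i = 0 ∨ k ≤ v i := fun i hi =>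
    (padicValNat_sigma_one_prime_pow_eq_zero_or_lt hpodd (hq i) (mem_filter.mp hi).2 _).imp_right
      fun h => (hk i).trans h.le
  refine hk2 (eq_two_of_exponent_bounds hα4 hαk (hsum ▸ (sum_filter_add_sum_filter_not _ _ _).symm)
    hkS ?_ ?_ (sum_eq_zero_or_le_sum hvSc))
  · simpa [mul_comm] using card_nsmul_le_sum S v k fun i hi => (hvS i hi).1
  · simpa [mul_comm] using sum_le_card_nsmul S v (#S - 1) fun i hi => (hvS i hi).2

theorem ell_ne_p_of_k_ne_two
    (N p α s : ℕ) (q β : Fin s → ℕ)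
    (hN : N = p ^ α * ∏ i, q i ^ (2 * β i))
    (hodd : Odd N)
    (hperf : ArithmeticFunction.sigma 1 N = 2 * N)
    (hp : p.Prime) (hpodd : Odd p)
    (hq : ∀ i, (q i).Prime) (hqodd : ∀ i, Odd (q i))
    (hinj : Function.Injective q)
    (hpq : ∀ i, p ≠ q i)
    (hα4 : α % 4 = 1) (hp4 : p % 4 = 1)
    (hαpos : 0 < α) (hβpos : ∀ i, 0 < β i)
    (ℓ k : ℕ) (hℓ : ℓ.Prime) (hkpos : 0 < k) (hk2 : k ≠ 2)
    (hdvd : ∀ i, ℓ ^ k ∣ 2 * β i + 1)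
    (hnd : ¬ ℓ ^ (5 * k) ∣ N) :
    ℓ ≠ p :=
  ell_ne_p_of_k_ne_two_general N p α s q β hN hperf hp hpodd hq hinj hpq hα4 ℓ k hk2 hdvd hnd
end

section
/- Under the standing setup, N has exactly four prime factors q_i with q_i ≡ 1 (mod ℓ); that is, #S = 4. -/
open Finset

lemma geom_split (y a b : ℕ) :
    (∑ j ∈ range (a * b), y ^ j) = (∑ j ∈ range a, y ^ j) * (∑ j ∈ range b, (y ^ a) ^ j) := by
  induction b with
  | zero => simp
  | succ b ih =>
    rw [Nat.mul_succ, Finset.sum_range_add, ih, Finset.sum_range_succ, mul_add]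
    congr 1
    have : ∀ x ∈ range a, y ^ (a * b + x) = y ^ x * (y ^ a) ^ b := by
      intro x _
      rw [pow_add, ← pow_mul, mul_comm]
    rw [Finset.sum_congr rfl this, ← Finset.sum_mul]

lemma geom_pred_mul (y m : ℕ) (hy : 1 ≤ y) :
    (y - 1) * (∑ j ∈ range m, y ^ j) = y ^ m - 1 := by
  have hym : 1 ≤ y ^ m := Nat.one_le_pow _ _ hy
  have := mul_geom_sum (x := (y : ℤ)) m
  apply @Nat.cast_injective ℤ
  push_cast [Nat.cast_sub hy, Nat.cast_sub hym]
  exact this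

lemma geom_mod (y t m : ℕ) (h : y ≡ 1 [MOD t]) :
    (∑ j ∈ range m, y ^ j) ≡ m [MOD t] := by
  induction m with
  | zero => simp [Nat.ModEq.refl]
  | succ m ih =>
    rw [Finset.sum_range_succ]
    have hp : y ^ m ≡ 1 [MOD t] := by simpa using h.pow m
    simpa using ih.add hp


/-- mod ℓ² refinement: if `ℓ` is odd and `y ≡ 1 [MOD ℓ]` then `∑_{j<ℓ} y^j ≡ ℓ [MOD ℓ²]`. -/
lemma geom_mod_sq (ℓ y : ℕ) (hodd : Odd ℓ) (h : y ≡ 1 [MOD ℓ]) (hy : 1 ≤ y) :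
    (∑ j ∈ range ℓ, y ^ j) ≡ ℓ [MOD ℓ ^ 2] := by
  have hdvd : ℓ ∣ y - 1 := (Nat.modEq_iff_dvd' hy).mp h.symm
  rw [← ZMod.natCast_eq_natCast_iff]
  push_cast
  have hc : ((y : ZMod (ℓ ^ 2)) - 1) = ((y - 1 : ℕ) : ZMod (ℓ ^ 2)) := by
    push_cast [Nat.cast_sub hy]; ring
  set c : ZMod (ℓ ^ 2) := ((y - 1 : ℕ) : ZMod (ℓ ^ 2)) with hcdef
  have hy' : (y : ZMod (ℓ ^ 2)) = 1 + c := by rw [← hc]; ring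
  have hc2 : c * c = 0 := by
    rw [hcdef, ← Nat.cast_mul, ZMod.natCast_eq_zero_iff, pow_two]
    exact mul_dvd_mul hdvd hdvd
  have hlc : (ℓ : ZMod (ℓ ^ 2)) * c = 0 := by
    rw [hcdef, ← Nat.cast_mul, ZMod.natCast_eq_zero_iff, pow_two]
    exact mul_dvd_mul_left ℓ hdvd
  have hpow : ∀ j : ℕ, (y : ZMod (ℓ ^ 2)) ^ j = 1 + (j : ZMod (ℓ ^ 2)) * c := by
    intro j
    induction j with
    | zero => simp
    | succ j ih =>
      push_cast
      linear_combination (y : ZMod (ℓ ^ 2)) * ih + (1 + (j : ZMod (ℓ ^ 2)) * c) * hy' + (j : ZMod (ℓ ^ 2)) * hc2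
  calc (∑ j ∈ range ℓ, (y : ZMod (ℓ ^ 2)) ^ j)
      = ∑ j ∈ range ℓ, (1 + (j : ZMod (ℓ ^ 2)) * c) := by
        exact Finset.sum_congr rfl (fun j _ => hpow j)
    _ = (ℓ : ZMod (ℓ ^ 2)) := by
        rw [Finset.sum_add_distrib, ← Finset.sum_mul]
        have hsum : (∑ j ∈ range ℓ, (j : ZMod (ℓ ^ 2))) = ((∑ j ∈ range ℓ, j : ℕ) : ZMod (ℓ ^ 2)) := by
          push_cast; rfl
        obtain ⟨k, hk⟩ := hodd
        have hleft : (∑ j ∈ range ℓ, j) = ℓ * k := by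
          have h2 : (∑ j ∈ range ℓ, j) * 2 = ℓ * (ℓ - 1) := Finset.sum_range_id_mul_two ℓ
          have : ℓ - 1 = 2 * k := by omega
          rw [this] at h2
          have h3 : (∑ j ∈ range ℓ, j) * 2 = (ℓ * k) * 2 := by rw [h2]; ring
          exact Nat.eq_of_mul_eq_mul_right (by norm_num) h3
        rw [hsum, hleft]
        push_cast
        rw [mul_comm (ℓ : ZMod (ℓ ^ 2)) (k : ZMod (ℓ ^ 2)), mul_assoc, hlc]
        simp


lemma fact_eq_one_of_modeq (ℓ a : ℕ) (hl : ℓ.Prime) (h : a ≡ ℓ [MOD ℓ ^ 2]) :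
    a.factorization ℓ = 1 := by
  have hl1 : 1 < ℓ := hl.one_lt
  have hll : ℓ % ℓ ^ 2 = ℓ := Nat.mod_eq_of_lt (by nlinarith)
  have key : a % ℓ ^ 2 = ℓ := by
    have := h; unfold Nat.ModEq at this; omega
  have ha0 : a ≠ 0 := by
    intro h0; rw [h0] at key; simp at key; omega
  have hda := Nat.div_add_mod a (ℓ ^ 2)
  rw [key] at hda
  have hdvd : ℓ ∣ a := ⟨ℓ * (a / ℓ ^ 2) + 1, by
    have : ℓ * (ℓ * (a / ℓ ^ 2) + 1) = ℓ ^ 2 * (a / ℓ ^ 2) + ℓ := by ring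
    omega⟩
  have hnd : ¬ ℓ ^ 2 ∣ a := by
    intro h2
    have : a % ℓ ^ 2 = 0 := Nat.dvd_iff_mod_eq_zero.mp h2
    omega
  have h1 : 1 ≤ a.factorization ℓ := by
    rw [← hl.pow_dvd_iff_le_factorization ha0, pow_one]; exact hdvd
  have h2 : ¬ 2 ≤ a.factorization ℓ := by
    rw [← hl.pow_dvd_iff_le_factorization ha0]; exact hnd
  omega



/-- If `t ∤ m` and `y ≡ 1 [MOD t]` then `v_t(y^m - 1) = v_t(y-1)`. -/
lemma val_stable (t y m : ℕ) (ht : t.Prime) (hy : 2 ≤ y) (hm : 1 ≤ m)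
    (h1 : y ≡ 1 [MOD t]) (hdm : ¬ t ∣ m) :
    (y ^ m - 1).factorization t = (y - 1).factorization t := by
  set G := ∑ j ∈ range m, y ^ j with hG
  have hmul : (y - 1) * G = y ^ m - 1 := geom_pred_mul y m (by omega)
  have hGm : G ≡ m [MOD t] := geom_mod y t m h1
  have hGnd : ¬ t ∣ G := by
    intro hdvd
    exact hdm ((Nat.modEq_zero_iff_dvd).mp ((hGm.symm).trans ((Nat.modEq_zero_iff_dvd).mpr hdvd)))
  have hG0 : G ≠ 0 := fun h0 => hGnd (h0 ▸ dvd_zero t)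
  have hy10 : y - 1 ≠ 0 := by omega
  rw [← hmul, Nat.factorization_mul hy10 hG0]
  simp [Nat.factorization_eq_zero_of_not_dvd hGnd]

/-- Extract a prime factor different from ℓ from a number with `v_ℓ ≤ 1`. -/
lemma exists_prime_factor_ne (ℓ Ψ : ℕ) (hp : ℓ.Prime) (h1 : 1 < Ψ) (hgt : ℓ < Ψ)
    (hv : Ψ.factorization ℓ ≤ 1) :
    ∃ t, t.Prime ∧ t ∣ Ψ ∧ t ≠ ℓ := by
  by_cases hd : ℓ ∣ Ψ
  · obtain ⟨M, hM⟩ := hd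
    have hM0 : M ≠ 0 := by rintro rfl; simp at hM; omega
    have hM1 : M ≠ 1 := by rintro rfl; simp at hM; omega
    have hlM : ¬ ℓ ∣ M := by
      intro hlM
      have : ℓ ^ 2 ∣ Ψ := by rw [hM, pow_two]; exact mul_dvd_mul_left ℓ hlM
      have := (hp.pow_dvd_iff_le_factorization (by omega)).mp this
      omega
    refine ⟨M.minFac, Nat.minFac_prime hM1, ?_, ?_⟩
    · exact dvd_trans (Nat.minFac_dvd M) ⟨ℓ, by rw [hM]; ring⟩
    · intro he; exact hlM (he ▸ Nat.minFac_dvd M)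
  · exact ⟨Ψ.minFac, Nat.minFac_prime (by omega), Nat.minFac_dvd Ψ,
      fun he => hd (he ▸ Nat.minFac_dvd Ψ)⟩

/-- `(q : ZMod t)^K = 1 ↔ t ∣ q^K - 1`. -/
lemma pow_eq_one_iff_dvd (t q K : ℕ) (hq : 1 ≤ q) :
    ((q : ZMod t) ^ K = 1) ↔ t ∣ q ^ K - 1 := by
  have h1 : 1 ≤ q ^ K := Nat.one_le_pow _ _ hq
  rw [← Nat.cast_pow, show (1 : ZMod t) = ((1 : ℕ) : ZMod t) by simp,
    ZMod.natCast_eq_natCast_iff]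
  constructor
  · intro h; exact (Nat.modEq_iff_dvd' h1).mp h.symm
  · intro h; exact ((Nat.modEq_iff_dvd' h1).mpr h).symm



/-- Key extraction: properties of a prime `t ≠ ℓ` dividing `∑_{j<ℓ} (q^m)^j`. -/
lemma key_extract (ℓ q m t : ℕ) (hl : ℓ.Prime) (hq : 2 ≤ q) (hm : 1 ≤ m)
    (ht : t.Prime) (htl : t ≠ ℓ) (hdvd : t ∣ ∑ j ∈ range ℓ, (q ^ m) ^ j) :
    orderOf ((q : ℕ) : ZMod t) ∣ m * ℓ ∧ ¬ orderOf ((q : ℕ) : ZMod t) ∣ m ∧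
      ℓ ∣ orderOf ((q : ℕ) : ZMod t) ∧ t ≡ 1 [MOD ℓ] ∧ ¬ t ∣ q := by
  have hqm1 : 1 ≤ q ^ m := Nat.one_le_pow _ _ (by omega)
  have hΨd : (∑ j ∈ range ℓ, (q ^ m) ^ j) ∣ q ^ (m * ℓ) - 1 := by
    refine ⟨q ^ m - 1, ?_⟩
    rw [mul_comm (∑ j ∈ range ℓ, (q ^ m) ^ j) (q ^ m - 1), geom_pred_mul _ _ hqm1, ← pow_mul]
  have h1 : t ∣ q ^ (m * ℓ) - 1 := dvd_trans hdvd hΨd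
  have h2 : ¬ t ∣ q ^ m - 1 := by
    intro hd2
    have hmod : (q ^ m) ≡ 1 [MOD t] := (Nat.modEq_iff_dvd' hqm1).mpr hd2 |>.symm
    have hΨl : (∑ j ∈ range ℓ, (q ^ m) ^ j) ≡ ℓ [MOD t] := geom_mod _ _ _ hmod
    have : t ∣ ℓ := (Nat.modEq_zero_iff_dvd).mp (hΨl.symm.trans ((Nat.modEq_zero_iff_dvd).mpr hdvd))
    exact htl ((Nat.prime_dvd_prime_iff_eq ht hl).mp this)
  have hu1 : ((q : ZMod t)) ^ (m * ℓ) = 1 := (pow_eq_one_iff_dvd t q _ (by omega)).mpr h1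
  have ho1 : orderOf ((q : ℕ) : ZMod t) ∣ m * ℓ := orderOf_dvd_iff_pow_eq_one.mpr hu1
  have ho2 : ¬ orderOf ((q : ℕ) : ZMod t) ∣ m := by
    intro hd
    exact h2 ((pow_eq_one_iff_dvd t q m (by omega)).mp (orderOf_dvd_iff_pow_eq_one.mp hd))
  have hlo : ℓ ∣ orderOf ((q : ℕ) : ZMod t) := by
    by_contra hno
    have hcop : (orderOf ((q : ℕ) : ZMod t)).Coprime ℓ :=
      Nat.Coprime.symm ((hl.coprime_iff_not_dvd).mpr hno)
    exact ho2 (hcop.dvd_of_dvd_mul_right ho1)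
  have hqml1 : 1 ≤ q ^ (m * ℓ) := Nat.one_le_pow _ _ (by omega)
  have htq : ¬ t ∣ q := by
    intro htq
    have h3 : t ∣ q ^ (m * ℓ) := dvd_pow htq (Nat.mul_ne_zero (by omega) hl.pos.ne')
    have h4 : t ∣ 1 := by
      have h5 := Nat.dvd_sub h3 h1
      rwa [Nat.sub_sub_self hqml1] at h5
    exact ht.one_lt.ne' (Nat.dvd_one.mp h4)
  haveI : Fact t.Prime := ⟨ht⟩
  have hu0 : ((q : ℕ) : ZMod t) ≠ 0 := by
    rw [Ne, ZMod.natCast_eq_zero_iff]; exact htq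
  have hfl : ((q : ℕ) : ZMod t) ^ (t - 1) = 1 := ZMod.pow_card_sub_one_eq_one hu0
  have hot : orderOf ((q : ℕ) : ZMod t) ∣ t - 1 := orderOf_dvd_iff_pow_eq_one.mpr hfl
  have hlt : ℓ ∣ t - 1 := dvd_trans hlo hot
  exact ⟨ho1, ho2, hlo, ((Nat.modEq_iff_dvd' ht.one_lt.le).mpr hlt).symm, htq⟩

lemma geom_pos (y k : ℕ) (hk : 1 ≤ k) : 0 < ∑ j ∈ range k, y ^ j := by
  have : (0:ℕ) < y ^ 0 := by norm_num
  calc (0:ℕ) < y ^ 0 := this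
    _ ≤ ∑ j ∈ range k, y ^ j := Finset.single_le_sum (f := fun j => y ^ j)
        (fun i _ => Nat.zero_le _) (Finset.mem_range.mpr (by omega))

lemma geom_lb (y k : ℕ) (hk : 1 ≤ k) : y ^ (k - 1) ≤ ∑ j ∈ range k, y ^ j :=
  Finset.single_le_sum (f := fun j => y ^ j) (fun i _ => Nat.zero_le _)
    (Finset.mem_range.mpr (by omega))

lemma val_geom_pow (ℓ x : ℕ) (hl : ℓ.Prime) (hlodd : Odd ℓ) (hx : 2 ≤ x)
    (hx1 : x ≡ 1 [MOD ℓ]) :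
    ∀ c, (∑ j ∈ range (ℓ ^ c), x ^ j).factorization ℓ = c := by
  intro c
  induction c with
  | zero => simp
  | succ c ih =>
    have hsplit := geom_split x (ℓ ^ c) ℓ
    rw [← pow_succ] at hsplit
    rw [hsplit]
    have hP0 : (∑ j ∈ range (ℓ ^ c), x ^ j) ≠ 0 :=
      (geom_pos x _ (Nat.one_le_pow _ _ hl.pos)).ne'
    have hypow : (x ^ ℓ ^ c) ≡ 1 [MOD ℓ] := by simpa using hx1.pow (ℓ ^ c)
    have hΨmod : (∑ j ∈ range ℓ, (x ^ ℓ ^ c) ^ j) ≡ ℓ [MOD ℓ ^ 2] :=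
      geom_mod_sq ℓ _ hlodd hypow (Nat.one_le_pow _ _ (by omega))
    have hΨv : (∑ j ∈ range ℓ, (x ^ ℓ ^ c) ^ j).factorization ℓ = 1 :=
      fact_eq_one_of_modeq ℓ _ hl hΨmod
    have hΨ0 : (∑ j ∈ range ℓ, (x ^ ℓ ^ c) ^ j) ≠ 0 :=
      (geom_pos _ _ hl.pos).ne'
    rw [Nat.factorization_mul hP0 hΨ0]
    simp [ih, hΨv]

lemma val_geom_eq (ℓ x n : ℕ) (hl : ℓ.Prime) (hlodd : Odd ℓ) (hx : 2 ≤ x)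
    (hx1 : x ≡ 1 [MOD ℓ]) (hn : 1 ≤ n) :
    (∑ j ∈ range n, x ^ j).factorization ℓ = n.factorization ℓ := by
  set c := n.factorization ℓ with hc
  set m := n / ℓ ^ c with hm
  have hnsplit : ℓ ^ c * m = n := Nat.ordProj_mul_ordCompl_eq_self n ℓ
  have hmnd : ¬ ℓ ∣ m := Nat.not_dvd_ordCompl hl (by omega)
  have hm1 : 1 ≤ m := by
    rcases Nat.eq_zero_or_pos m with h0 | h1
    · rw [h0] at hnsplit; omega
    · exact h1
  have hsplit : (∑ j ∈ range n, x ^ j) =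
      (∑ j ∈ range (ℓ ^ c), x ^ j) * (∑ j ∈ range m, (x ^ ℓ ^ c) ^ j) := by
    rw [← hnsplit, geom_split]
  have hypow : (x ^ ℓ ^ c) ≡ 1 [MOD ℓ] := by simpa using hx1.pow (ℓ ^ c)
  have hGmod : (∑ j ∈ range m, (x ^ ℓ ^ c) ^ j) ≡ m [MOD ℓ] := geom_mod _ _ _ hypow
  have hGnd : ¬ ℓ ∣ (∑ j ∈ range m, (x ^ ℓ ^ c) ^ j) := by
    intro hdvd
    exact hmnd ((Nat.modEq_zero_iff_dvd).mp
      (hGmod.symm.trans ((Nat.modEq_zero_iff_dvd).mpr hdvd)))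
  have hP0 : (∑ j ∈ range (ℓ ^ c), x ^ j) ≠ 0 :=
    (geom_pos x _ (Nat.one_le_pow _ _ hl.pos)).ne'
  have hG0 : (∑ j ∈ range m, (x ^ ℓ ^ c) ^ j) ≠ 0 := (geom_pos _ _ hm1).ne'
  rw [hsplit, Nat.factorization_mul hP0 hG0]
  simp [val_geom_pow ℓ x hl hlodd hx hx1 c, Nat.factorization_eq_zero_of_not_dvd hGnd]

lemma psi_dvd_geom (x a b n : ℕ) (hab : a * b ∣ n) :
    (∑ j ∈ range b, (x ^ a) ^ j) ∣ ∑ j ∈ range n, x ^ j := by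
  obtain ⟨m, hm⟩ := hab
  subst hm
  have h1 : a * b * m = a * (b * m) := by ring
  rw [h1, geom_split x a (b * m), geom_split (x ^ a) b m]
  exact dvd_mul_of_dvd_right (dvd_mul_right _ _) _

set_option maxHeartbeats 2000000 in
theorem card_S_eq_four
    (N p α s : ℕ) (q β : Fin s → ℕ)
    (hN : N = p ^ α * ∏ i, q i ^ (2 * β i))
    (hodd : Odd N)
    (hperf : ArithmeticFunction.sigma 1 N = 2 * N)
    (hp : p.Prime) (hpodd : Odd p)
    (hq : ∀ i, (q i).Prime) (hqodd : ∀ i, Odd (q i))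
    (hinj : Function.Injective q)
    (hpq : ∀ i, p ≠ q i)
    (hα4 : α % 4 = 1) (hp4 : p % 4 = 1)
    (hαpos : 0 < α) (hβpos : ∀ i, 0 < β i)
    (hk : ∀ i, p ^ 2 ∣ 2 * β i + 1)
    (hnd : ¬ p ^ 10 ∣ N)
    (S : Finset ℕ)
    (hSdef : S = (Finset.univ.filter fun i => q i ≡ 1 [MOD p]).image q) :
    S.card = 4 := by
  classical
  have hp2 : 2 ≤ p := hp.two_le
  have hp5 : 5 ≤ p := by
    rcases Nat.lt_or_ge p 5 with h | h
    · interval_cases p <;> simp_all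
    · exact h
  have hq2 : ∀ i, 2 ≤ q i := fun i => (hq i).two_le
  set n : Fin s → ℕ := fun i => 2 * β i + 1 with hndef
  set sig : Fin s → ℕ := fun i => ∑ j ∈ range (n i), q i ^ j with hsigdef
  have hn1 : ∀ i, 1 ≤ n i := fun i => by simp [hndef]
  have hsig_pos : ∀ i, 0 < sig i := fun i => geom_pos _ _ (hn1 i)
  -- the σ decomposition
  have hcop : Nat.Coprime (p ^ α) (∏ i, q i ^ (2 * β i)) := by
    apply Nat.Coprime.prod_right
    intro i _
    exact Nat.Coprime.pow _ _ ((Nat.coprime_primes hp (hq i)).mpr (hpq i))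
  have hdec : 2 * N = (∑ j ∈ range (α + 1), p ^ j) * ∏ i, sig i := by
    have h1 : ArithmeticFunction.sigma 1 N =
        ArithmeticFunction.sigma 1 (p ^ α) *
          ArithmeticFunction.sigma 1 (∏ i, q i ^ (2 * β i)) := by
      rw [hN]
      exact ArithmeticFunction.IsMultiplicative.map_mul_of_coprime
        ArithmeticFunction.isMultiplicative_sigma hcop
    have h2 : ArithmeticFunction.sigma 1 (∏ i, q i ^ (2 * β i)) = ∏ i, sig i := by
      rw [ArithmeticFunction.IsMultiplicative.map_prod _
        ArithmeticFunction.isMultiplicative_sigma Finset.univ ?_]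
      · apply Finset.prod_congr rfl
        intro i _
        rw [ArithmeticFunction.sigma_one_apply_prime_pow (hq i)]
      · intro i _ j _ hij
        exact Nat.Coprime.pow _ _ ((Nat.coprime_primes (hq i) (hq j)).mpr (fun he => hij (hinj he)))
    rw [← hperf, h1, h2, ArithmeticFunction.sigma_one_apply_prime_pow hp]
  -- valuation bookkeeping: α = ∑ v_p(sig i)
  have hN0 : N ≠ 0 := by
    rw [hN]
    exact Nat.mul_ne_zero (pow_ne_zero _ (by omega))
      (Finset.prod_ne_zero_iff.mpr (fun i _ => pow_ne_zero _ (by have := hq2 i; omega)))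
  have hvα : (∑ i, (sig i).factorization p) = α := by
    have hlhs : (2 * N).factorization p = α := by
      rw [Nat.factorization_mul (by norm_num) hN0, hN,
        Nat.factorization_mul (pow_ne_zero _ (by omega))
          (Finset.prod_ne_zero_iff.mpr (fun i _ => pow_ne_zero _ (by have := hq2 i; omega)))]
      have h2 : (2 : ℕ).factorization p = 0 :=
        Nat.factorization_eq_zero_of_not_dvd (fun hd => by
          have := Nat.le_of_dvd (by norm_num) hd; omega)
      have hpp : ((p ^ α).factorization) p = α := by
        rw [hp.factorization_pow]; simp [hp.factorization]
      have hprod : ((∏ i, q i ^ (2 * β i)).factorization) p = 0 := by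
        apply Nat.factorization_eq_zero_of_not_dvd
        intro hd
        obtain ⟨i, _, hdi⟩ := hp.prime.exists_mem_finset_dvd hd
        exact (hpq i) ((Nat.prime_dvd_prime_iff_eq hp (hq i)).mp (hp.dvd_of_dvd_pow hdi))
      simp [Finsupp.add_apply, h2, hpp, hprod, hp.factorization]
    have hrhs : (2 * N).factorization p =
        ((∑ j ∈ range (α + 1), p ^ j).factorization p) + ∑ i, (sig i).factorization p := by
      rw [hdec, Nat.factorization_mul (geom_pos _ _ (by omega)).ne'
        (Finset.prod_ne_zero_iff.mpr (fun i _ => (hsig_pos i).ne')),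
        Nat.factorization_prod (fun i _ => (hsig_pos i).ne')]
      simp [Finsupp.add_apply, Finset.sum_apply']
    have hgeo0 : ((∑ j ∈ range (α + 1), p ^ j).factorization p) = 0 := by
      apply Nat.factorization_eq_zero_of_not_dvd
      intro hd
      have hsplit : (∑ j ∈ range (α + 1), p ^ j) = p * (∑ i ∈ range α, p ^ i) + 1 := by
        rw [Finset.sum_range_succ' (fun j => p ^ j) α]
        simp [pow_succ, Finset.mul_sum, mul_comm]
      rw [hsplit] at hd
      have : p ∣ 1 := (Nat.dvd_add_right (Dvd.intro _ rfl)).mp hd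
      exact hp.one_lt.ne' (Nat.dvd_one.mp this)
    omega
  -- index version of S
  set SI := Finset.univ.filter (fun i : Fin s => q i ≡ 1 [MOD p]) with hSIdef
  have hcardS : S.card = SI.card := by
    rw [hSdef]; exact Finset.card_image_of_injective _ hinj
  have hc2 : ∀ i ∈ SI, 2 ≤ (n i).factorization p := by
    intro i _
    exact (hp.pow_dvd_iff_le_factorization (by have := hn1 i; omega)).mp (hk i)
  have hVS : ∀ i ∈ SI, (sig i).factorization p = (n i).factorization p := by
    intro i hi
    exact val_geom_eq p (q i) (n i) hp hpodd (hq2 i)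
      ((Finset.mem_filter.mp hi).2) (hn1 i)
  have hα9 : α ≤ 9 := by
    by_contra h
    apply hnd
    calc p ^ 10 ∣ p ^ α := pow_dvd_pow p (by omega)
      _ ∣ N := by rw [hN]; exact Dvd.intro _ rfl
  -- hard modules
  have hdvd2N : ∀ i, sig i ∣ 2 * N := by
    intro i
    rw [hdec]
    exact Dvd.dvd.mul_left (Finset.dvd_prod_of_mem _ (Finset.mem_univ i)) _
  have hmemS : ∀ t : ℕ, t.Prime → t ∣ 2 * N → t ≡ 1 [MOD p] → t ∈ S := by
    intro t ht htd htm
    have ht1 : 1 ≤ t := ht.pos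
    have hpt1 : p ∣ t - 1 := (Nat.modEq_iff_dvd' ht1).mp htm.symm
    have ht2 : t ≠ 2 := by
      rintro rfl
      have : p ∣ 1 := by simpa using hpt1
      have := Nat.le_of_dvd (by norm_num) this
      omega
    have htN : t ∣ N := by
      rcases (Nat.Prime.dvd_mul ht).mp htd with h | h
      · exact absurd ((Nat.prime_dvd_prime_iff_eq ht Nat.prime_two).mp h) ht2
      · exact h
    have htp : t ≠ p := by
      rintro rfl
      have := Nat.le_of_dvd (by omega) hpt1
      omega
    rw [hN] at htN
    rcases (Nat.Prime.dvd_mul ht).mp htN with h | h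
    · exact absurd ((Nat.prime_dvd_prime_iff_eq ht hp).mp (ht.dvd_of_dvd_pow h)) htp
    · obtain ⟨i, _, hdi⟩ := ht.prime.exists_mem_finset_dvd h
      have hti : t = q i := (Nat.prime_dvd_prime_iff_eq ht (hq i)).mp (ht.dvd_of_dvd_pow hdi)
      rw [hSdef]
      apply Finset.mem_image.mpr
      refine ⟨i, Finset.mem_filter.mpr ⟨Finset.mem_univ i, ?_⟩, hti.symm⟩
      rw [← hti]; exact htm
  have hsig_eq : ∀ i, sig i = ∑ j ∈ range (n i), q i ^ j := fun i => rfl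
  have htower : ∀ i ∈ SI, (n i).factorization p + 1 ≤ S.card := by
    intro i hi
    set c := (n i).factorization p with hcdef
    have hx1 : q i ≡ 1 [MOD p] := (Finset.mem_filter.mp hi).2
    have hxgt : p + 1 ≤ q i := by
      have hd : p ∣ q i - 1 := (Nat.modEq_iff_dvd' (by have := hq2 i; omega)).mp hx1.symm
      have := Nat.le_of_dvd (by have := hq2 i; omega) hd
      omega
    have hex : ∀ k ∈ Finset.Icc 1 c, ∃ t : ℕ, t ∈ S ∧ t ≠ q i ∧
        orderOf ((q i : ℕ) : ZMod t) = p ^ k := by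
      intro k hk
      rw [Finset.mem_Icc] at hk
      have hyc : (q i) ^ p ^ (k - 1) ≡ 1 [MOD p] := by simpa using hx1.pow (p ^ (k - 1))
      have hy2 : q i ≤ (q i) ^ p ^ (k - 1) :=
        Nat.le_self_pow (pow_pos hp.pos _).ne' _
      have hΨlb : (q i) ^ p ^ (k - 1) ≤ ∑ j ∈ range p, ((q i) ^ p ^ (k - 1)) ^ j :=
        le_trans (Nat.le_self_pow (by omega) _) (geom_lb _ p (by omega))
      have hΨv : (∑ j ∈ range p, ((q i) ^ p ^ (k - 1)) ^ j).factorization p ≤ 1 :=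
        le_of_eq (fact_eq_one_of_modeq p _ hp (geom_mod_sq p _ hpodd hyc (Nat.one_le_pow _ _ (by omega))))
      obtain ⟨t, ht, htd, htne⟩ := exists_prime_factor_ne p _ hp (by omega) (by omega) hΨv
      obtain ⟨ho1, ho2, hpo, htmod, htq⟩ :=
        key_extract p (q i) (p ^ (k - 1)) t hp (hq2 i) (Nat.one_le_pow _ _ hp.pos) ht htne htd
      have hkk : k - 1 + 1 = k := by omega
      have hppow : p ^ (k - 1) * p = p ^ k := by rw [← pow_succ, hkk]
      have hok : orderOf ((q i : ℕ) : ZMod t) = p ^ k := by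
        rw [hppow] at ho1
        obtain ⟨j, hjk, hje⟩ := (Nat.dvd_prime_pow hp).mp ho1
        have hjeq : j = k := by
          by_contra hne2
          have hjle : j ≤ k - 1 := by omega
          exact ho2 (hje ▸ pow_dvd_pow p hjle)
        rw [hje, hjeq]
      have hpk : p ^ (k - 1) * p ∣ n i := by
        rw [hppow]
        exact (hp.pow_dvd_iff_le_factorization (by have := hn1 i; omega)).mpr (by omega)
      have hΨsig : (∑ j ∈ range p, ((q i) ^ p ^ (k - 1)) ^ j) ∣ sig i := by
        rw [hsig_eq i]
        exact psi_dvd_geom (q i) (p ^ (k - 1)) p (n i) hpk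
      have htS : t ∈ S := hmemS t ht (htd.trans (hΨsig.trans (hdvd2N i))) htmod
      exact ⟨t, htS, fun he => htq (he ▸ dvd_refl t), hok⟩
    have hqiS : q i ∈ S := by
      rw [hSdef]
      exact Finset.mem_image.mpr ⟨i, hi, rfl⟩
    let f : ℕ → ℕ := fun k => if h : k ∈ Finset.Icc 1 c then (hex k h).choose else 0
    have hfspec : ∀ k (h : k ∈ Finset.Icc 1 c), f k ∈ S ∧ f k ≠ q i ∧
        orderOf ((q i : ℕ) : ZMod (f k)) = p ^ k := by
      intro k h
      have hfk : f k = (hex k h).choose := dif_pos h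
      rw [hfk]
      exact (hex k h).choose_spec
    have hmapsto : ∀ k ∈ Finset.Icc 1 c, f k ∈ S.erase (q i) := by
      intro k hkk
      exact Finset.mem_erase.mpr ⟨(hfspec k hkk).2.1, (hfspec k hkk).1⟩
    have hinj' : Set.InjOn f (Finset.Icc 1 c) := by
      intro a ha b hb hab
      have h1 := (hfspec a ha).2.2
      have h2 := (hfspec b hb).2.2
      rw [hab] at h1
      exact Nat.pow_right_injective hp2 (h1.symm.trans h2)
    have hcard1 : c ≤ (S.erase (q i)).card := by
      have := Finset.card_le_card_of_injOn f hmapsto hinj'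
      simpa using this
    have hcard2 := Finset.card_erase_of_mem hqiS
    have hScpos : 1 ≤ S.card := Finset.card_pos.mpr ⟨q i, hqiS⟩
    omega
  have hT : ∀ i, i ∉ SI → (sig i).factorization p ≠ 0 → 4 ≤ S.card := by
    intro i hiS hV
    haveI : Fact p.Prime := ⟨hp⟩
    have hxne1 : ¬ (q i ≡ 1 [MOD p]) := by
      intro h; exact hiS (by rw [hSIdef]; exact Finset.mem_filter.mpr ⟨Finset.mem_univ i, h⟩)
    have hpx : ¬ p ∣ q i := by
      intro hd
      exact (hpq i) ((Nat.prime_dvd_prime_iff_eq hp (hq i)).mp hd)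
    have hx0 : ((q i : ℕ) : ZMod p) ≠ 0 := by
      rw [Ne, ZMod.natCast_eq_zero_iff]; exact hpx
    set d := orderOf ((q i : ℕ) : ZMod p) with hddef
    have hdp1 : d ∣ p - 1 :=
      orderOf_dvd_iff_pow_eq_one.mpr (ZMod.pow_card_sub_one_eq_one hx0)
    have hd0 : 0 < d := Nat.pos_of_dvd_of_pos hdp1 (by omega)
    have hdlt : d < p := by
      have := Nat.le_of_dvd (by omega) hdp1
      omega
    have hd1 : d ≠ 1 := by
      intro h1
      apply hxne1
      have : ((q i : ℕ) : ZMod p) = 1 := orderOf_eq_one_iff.mp h1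
      rw [show (1 : ZMod p) = ((1 : ℕ) : ZMod p) by simp] at this
      exact (ZMod.natCast_eq_natCast_iff _ _ _).mp this
    have hd2 : 2 ≤ d := by omega
    have hpd2 : ¬ p ∣ d := fun hdd => by
      have := Nat.le_of_dvd hd0 hdd
      omega
    -- p ∣ sig i  → d ∣ n i
    have hpsig : p ∣ sig i := by
      by_contra hnd2
      exact hV (Nat.factorization_eq_zero_of_not_dvd hnd2)
    have hpqn : p ∣ (q i) ^ (n i) - 1 := by
      have hmul : ((q i) - 1) * sig i = (q i) ^ (n i) - 1 := by
        rw [hsig_eq i]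
        exact geom_pred_mul (q i) (n i) (by have := hq2 i; omega)
      exact hmul ▸ Dvd.dvd.mul_left hpsig _
    have hdn : d ∣ n i :=
      orderOf_dvd_iff_pow_eq_one.mpr ((pow_eq_one_iff_dvd p (q i) (n i) (by have := hq2 i; omega)).mpr hpqn)
    have hp2n : p ^ 2 ∣ n i := hk i
    have hdp2n : d * p ^ 2 ∣ n i := by
      refine Nat.Coprime.mul_dvd_of_dvd_of_dvd ?_ hdn hp2n
      exact (Nat.Coprime.pow_right _ ((Nat.coprime_comm).mp ((hp.coprime_iff_not_dvd).mpr hpd2)))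
    have hqd1 : (q i) ^ d ≡ 1 [MOD p] :=
      (Nat.modEq_iff_dvd' (Nat.one_le_pow _ _ (by have := hq2 i; omega))).mpr
        ((pow_eq_one_iff_dvd p (q i) d (by have := hq2 i; omega)).mp (pow_orderOf_eq_one _)) |>.symm
    have hpleqd : p < (q i) ^ d := by
      have h1 : p ∣ (q i) ^ d - 1 :=
        (pow_eq_one_iff_dvd p (q i) d (by have := hq2 i; omega)).mp (pow_orderOf_eq_one _)
      have h2 : 1 ≤ (q i) ^ d - 1 := by
        have : 2 ^ 2 ≤ (q i) ^ d := Nat.pow_le_pow_left (hq2 i) 2 |>.trans (Nat.pow_le_pow_right (by have := hq2 i; omega) hd2)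
        omega
      have := Nat.le_of_dvd h2 h1
      omega
    -- generic facts
    have hq1 : 1 ≤ q i := by have := hq2 i; omega
    -- extraction of a "new" prime avoiding a bad locus, for C and D
    have extract_CD : ∀ m e : ℕ, 1 ≤ m → 1 ≤ e → m * p = e * d →
        ((q i) ^ m ≡ 1 [MOD p]) → d + e ≤ m * (p - 1) →
        ∃ t : ℕ, t.Prime ∧ t ∣ (∑ j ∈ range p, ((q i) ^ m) ^ j) ∧ t ≠ p ∧
          ¬ t ∣ (q i) ^ e - 1 := by
      intro m e hm1 he1 hme hqm1 hsize
      set C := ∑ j ∈ range p, ((q i) ^ m) ^ j with hCdef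
      have hC0 : C ≠ 0 := (geom_pos _ _ (by omega)).ne'
      have hqe1 : 1 ≤ (q i) ^ e := Nat.one_le_pow _ _ (by omega)
      have hqe2 : 2 ≤ (q i) ^ e := by
        calc 2 ≤ q i := hq2 i
          _ ≤ (q i) ^ e := Nat.le_self_pow (by omega) _
      have hbad0 : p * ((q i) ^ e - 1) ≠ 0 := by
        have : p ∣ (q i) ^ e - 1 → True := fun _ => trivial
        have h1 : 1 ≤ (q i) ^ e - 1 := by omega
        positivity
      by_contra hA
      push_neg at hA
      have hvpC : C.factorization p = 1 :=
        fact_eq_one_of_modeq p C hp (geom_mod_sq p _ hpodd hqm1 (Nat.one_le_pow _ _ (by omega)))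
      have hCd : C ∣ p * ((q i) ^ e - 1) := by
        rw [← Nat.factorization_le_iff_dvd hC0 hbad0]
        apply Finsupp.le_def.mpr
        intro t
        by_cases htp : t.Prime
        swap
        · simp [Nat.factorization_eq_zero_of_not_prime _ htp]
        by_cases htC : t ∣ C
        swap
        · simp [Nat.factorization_eq_zero_of_not_dvd htC]
        by_cases hteq : t = p
        · subst hteq
          rw [hvpC, Nat.factorization_mul (by omega) (by omega)]
          have : (Nat.factorization t) t = 1 := by
            rw [htp.factorization]; simp
          simp [this]
        · have htbad : t ∣ (q i) ^ e - 1 := hA t htp htC hteq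
          obtain ⟨ho1, ho2, hpo, htmod, htq⟩ :=
            key_extract p (q i) m t hp (hq2 i) (by omega) htp hteq htC
          have htgt : p + 1 ≤ t := by
            have hd' : p ∣ t - 1 := (Nat.modEq_iff_dvd' htp.one_lt.le).mp htmod.symm
            have := Nat.le_of_dvd (by have := htp.two_le; omega) hd'
            have := htp.two_le
            omega
          have htnd : ¬ t ∣ d := fun hdd => by
            have := Nat.le_of_dvd hd0 hdd
            omega
          have hstep1 : C.factorization t ≤ ((q i) ^ (m * p) - 1).factorization t := by
            have hmul : ((q i) ^ m - 1) * C = (q i) ^ (m * p) - 1 := by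
              rw [hCdef, geom_pred_mul _ _ (Nat.one_le_pow _ _ (by omega)), ← pow_mul]
            have hqm0 : (q i) ^ m - 1 ≠ 0 := by
              have : 2 ≤ (q i) ^ m := by
                calc 2 ≤ q i := hq2 i
                  _ ≤ (q i) ^ m := Nat.le_self_pow (by omega) _
              omega
            rw [← hmul, Nat.factorization_mul hqm0 hC0]
            simp
          have hstep2 : ((q i) ^ (m * p) - 1).factorization t = ((q i) ^ e - 1).factorization t := by
            have hrw : (q i) ^ (m * p) = ((q i) ^ e) ^ d := by rw [← pow_mul, hme]
            rw [hrw]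
            exact val_stable t ((q i) ^ e) d htp hqe2 (by omega)
              (((Nat.modEq_iff_dvd' hqe1).mpr htbad).symm) htnd
          rw [Nat.factorization_mul (by omega) (by omega)]
          calc C.factorization t ≤ ((q i) ^ e - 1).factorization t := hstep1.trans (le_of_eq hstep2)
            _ ≤ _ := le_add_self
      -- size contradiction
      have hub : C ≤ p * ((q i) ^ e - 1) := Nat.le_of_dvd (by omega) hCd
      have hlb : (q i) ^ (m * (p - 1)) ≤ C := by
        calc (q i) ^ (m * (p - 1)) = ((q i) ^ m) ^ (p - 1) := by rw [pow_mul]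
          _ ≤ C := geom_lb _ p (by omega)
      have hsz : p * ((q i) ^ e - 1) < (q i) ^ (m * (p - 1)) := by
        calc p * ((q i) ^ e - 1) < (q i) ^ d * (q i) ^ e := by
              apply mul_lt_mul'' hpleqd (by omega) (by omega) (by omega)
          _ = (q i) ^ (d + e) := by rw [pow_add]
          _ ≤ (q i) ^ (m * (p - 1)) := Nat.pow_le_pow_right (by omega) hsize
      omega
    have extract_AB : ∀ m : ℕ, 1 ≤ m → ¬ ((q i) ^ m ≡ 1 [MOD p]) →
        ∃ t : ℕ, t.Prime ∧ t ∣ (∑ j ∈ range p, ((q i) ^ m) ^ j) ∧ t ≠ p := by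
      intro m hm hqm
      have hqm2 : 2 ≤ (q i) ^ m := by
        calc 2 ≤ q i := hq2 i
          _ ≤ (q i) ^ m := Nat.le_self_pow (by omega) _
      have hg : 1 < ∑ j ∈ range p, ((q i) ^ m) ^ j := by
        have h1 := geom_lb ((q i) ^ m) p (by omega)
        have h2 : 2 ≤ ((q i) ^ m) ^ (p - 1) :=
          le_trans hqm2 (Nat.le_self_pow (by omega) _)
        omega
      have hpS : ¬ p ∣ (∑ j ∈ range p, ((q i) ^ m) ^ j) := by
        intro hdS
        have hmul : ((q i) ^ m - 1) * (∑ j ∈ range p, ((q i) ^ m) ^ j) = ((q i) ^ m) ^ p - 1 :=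
          geom_pred_mul _ p (by omega)
        have hdd : p ∣ ((q i) ^ m) ^ p - 1 := hmul ▸ Dvd.dvd.mul_left hdS _
        have h1 : (((q i) ^ m : ℕ) : ZMod p) ^ p = 1 :=
          (pow_eq_one_iff_dvd p ((q i) ^ m) p (by omega)).mpr hdd
        rw [ZMod.pow_card] at h1
        rw [show (1 : ZMod p) = ((1 : ℕ) : ZMod p) by simp] at h1
        exact hqm ((ZMod.natCast_eq_natCast_iff _ _ _).mp h1)
      refine ⟨(∑ j ∈ range p, ((q i) ^ m) ^ j).minFac, Nat.minFac_prime (by omega),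
        Nat.minFac_dvd _, ?_⟩
      intro he
      apply hpS
      have h5 := Nat.minFac_dvd (∑ j ∈ range p, ((q i) ^ m) ^ j)
      rwa [he] at h5
    -- the four primes
    have hxne1' : ¬ ((q i) ^ 1 ≡ 1 [MOD p]) := by simpa [pow_one] using hxne1
    have hqp1 : ¬ ((q i) ^ p ≡ 1 [MOD p]) := by
      intro h
      have h1 : (((q i) ^ p : ℕ) : ZMod p) = ((1 : ℕ) : ZMod p) :=
        (ZMod.natCast_eq_natCast_iff _ _ _).mpr h
      rw [Nat.cast_pow, ZMod.pow_card] at h1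
      rw [show ((1 : ℕ) : ZMod p) = (1 : ZMod p) by simp] at h1
      exact hxne1 ((ZMod.natCast_eq_natCast_iff _ _ _).mp (by rw [h1]; simp))
    have hszC : d + p ≤ d * (p - 1) := by
      have h1 : 2 * d + p ≤ d * p := by nlinarith [hd2, hp5]
      have h2 : d * (p - 1) = d * p - d * 1 := by rw [Nat.mul_sub]
      have h3 : d * 1 ≤ d * p := Nat.mul_le_mul_left d (by omega)
      rw [h2]
      rw [mul_one] at h3 ⊢
      rw [Nat.le_sub_iff_add_le h3]
      linarith [h1]
    have hszD : d + p * p ≤ (d * p) * (p - 1) := by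
      have h1 : 2 * d + d * p + p * p ≤ d * p * p := by
        have hd' : (2:ℤ) ≤ (d:ℤ) := by exact_mod_cast hd2
        have hp' : (5:ℤ) ≤ (p:ℤ) := by exact_mod_cast hp5
        have h1' : (2 * d + d * p + p * p : ℤ) ≤ d * p * p := by
          nlinarith [mul_nonneg (by linarith : (0:ℤ) ≤ (d:ℤ) - 2)
              (by nlinarith : (0:ℤ) ≤ (p:ℤ) * (p:ℤ) - (p:ℤ) - 2),
            mul_nonneg (by linarith : (0:ℤ) ≤ (p:ℤ) - 5)
              (by linarith : (0:ℤ) ≤ (p:ℤ) + 3)]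
        exact_mod_cast h1'
      have h2 : (d * p) * (p - 1) = d * p * p - d * p * 1 := by rw [Nat.mul_sub]
      have h3 : d * p * 1 ≤ d * p * p := Nat.mul_le_mul_left _ (by omega)
      rw [h2]
      rw [mul_one] at h3 ⊢
      rw [Nat.le_sub_iff_add_le h3]
      linarith [h1]
    have hqdp1 : (q i) ^ (d * p) ≡ 1 [MOD p] := by
      have := hqd1.pow p
      simpa [← pow_mul] using this
    obtain ⟨tA, htA, htAd, htAne⟩ := extract_AB 1 le_rfl hxne1'
    obtain ⟨tB, htB, htBd, htBne⟩ := extract_AB p (by omega) hqp1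
    obtain ⟨tC, htC, htCd, htCne, htCbad⟩ :=
      extract_CD d p (by omega) (by omega) (mul_comm d p) hqd1 hszC
    obtain ⟨tD, htD, htDd, htDne, htDbad⟩ :=
      extract_CD (d * p) (p * p) (Nat.one_le_iff_ne_zero.mpr (Nat.mul_pos hd0 hp.pos).ne')
        (Nat.one_le_iff_ne_zero.mpr (Nat.mul_pos hp.pos hp.pos).ne') (by ring) hqdp1 hszD
    obtain ⟨hoA1, hoA2, hpoA, htAmod, htAq⟩ :=
      key_extract p (q i) 1 tA hp (hq2 i) le_rfl htA htAne htAd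
    obtain ⟨hoB1, hoB2, hpoB, htBmod, htBq⟩ :=
      key_extract p (q i) p tB hp (hq2 i) (by omega) htB htBne htBd
    obtain ⟨hoC1, hoC2, hpoC, htCmod, htCq⟩ :=
      key_extract p (q i) d tC hp (hq2 i) (by omega) htC htCne htCd
    obtain ⟨hoD1, hoD2, hpoD, htDmod, htDq⟩ :=
      key_extract p (q i) (d * p) tD hp (hq2 i)
        (Nat.one_le_iff_ne_zero.mpr (Nat.mul_pos hd0 hp.pos).ne') htD htDne htDd
    have hoAp : orderOf ((q i : ℕ) : ZMod tA) = p :=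
      Nat.dvd_antisymm (by simpa using hoA1) hpoA
    have hoCp : ¬ orderOf ((q i : ℕ) : ZMod tC) ∣ p := by
      intro h
      exact htCbad ((pow_eq_one_iff_dvd tC (q i) p (by omega)).mp
        (orderOf_dvd_iff_pow_eq_one.mp h))
    have hoDpp : ¬ orderOf ((q i : ℕ) : ZMod tD) ∣ p * p := by
      intro h
      exact htDbad ((pow_eq_one_iff_dvd tD (q i) (p * p) (by omega)).mp
        (orderOf_dvd_iff_pow_eq_one.mp h))
    -- membership in S
    have hmp1 : 1 * p ∣ n i := by
      rw [one_mul]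
      exact dvd_trans (dvd_pow_self p (by norm_num)) hp2n
    have hmpp : p * p ∣ n i := by
      have : p * p = p ^ 2 := (pow_two p).symm
      rw [this]; exact hp2n
    have hmdp : d * p ∣ n i :=
      dvd_trans (mul_dvd_mul_left d (dvd_pow_self p (by norm_num))) hdp2n
    have hmdpp : (d * p) * p ∣ n i := by
      have : (d * p) * p = d * p ^ 2 := by rw [mul_assoc, ← pow_two]
      rw [this]; exact hdp2n
    have hsigA : (∑ j ∈ range p, ((q i) ^ 1) ^ j) ∣ sig i := by
      rw [hsig_eq i]; exact psi_dvd_geom (q i) 1 p (n i) hmp1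
    have hsigB : (∑ j ∈ range p, ((q i) ^ p) ^ j) ∣ sig i := by
      rw [hsig_eq i]; exact psi_dvd_geom (q i) p p (n i) hmpp
    have hsigC : (∑ j ∈ range p, ((q i) ^ d) ^ j) ∣ sig i := by
      rw [hsig_eq i]; exact psi_dvd_geom (q i) d p (n i) hmdp
    have hsigD : (∑ j ∈ range p, ((q i) ^ (d * p)) ^ j) ∣ sig i := by
      rw [hsig_eq i]; exact psi_dvd_geom (q i) (d * p) p (n i) hmdpp
    have htAS : tA ∈ S := hmemS tA htA (htAd.trans (hsigA.trans (hdvd2N i))) htAmod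
    have htBS : tB ∈ S := hmemS tB htB (htBd.trans (hsigB.trans (hdvd2N i))) htBmod
    have htCS : tC ∈ S := hmemS tC htC (htCd.trans (hsigC.trans (hdvd2N i))) htCmod
    have htDS : tD ∈ S := hmemS tD htD (htDd.trans (hsigD.trans (hdvd2N i))) htDmod
    -- distinctness
    have hAB : tA ≠ tB := by
      intro h; rw [h] at hoAp
      exact hoB2 (hoAp ▸ dvd_refl p)
    have hAC : tA ≠ tC := by
      intro h; rw [h] at hoAp
      exact hoCp (hoAp ▸ dvd_refl p)
    have hAD : tA ≠ tD := by
      intro h; rw [h] at hoAp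
      exact hoDpp (hoAp ▸ dvd_mul_left p p)
    have hBC : tB ≠ tC := by
      intro h
      rw [h] at hoB1 hoB2
      have hpp2 : p * p = p ^ 2 := (pow_two p).symm
      rw [hpp2] at hoB1
      obtain ⟨j, hj2, hje⟩ := (Nat.dvd_prime_pow hp).mp hoB1
      have hj2' : j = 2 := by
        by_contra hne2
        have : j ≤ 1 := by omega
        exact hoB2 (hje ▸ pow_dvd_pow p this |>.trans (by rw [pow_one]))
      rw [hj2'] at hje
      have : p * p ∣ d * p := by rw [← hpp2] at hje; exact hje ▸ hoC1
      have := (Nat.mul_dvd_mul_iff_right hp.pos).mp this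
      exact hpd2 this
    have hBD : tB ≠ tD := by
      intro h; rw [h] at hoB1
      exact hoDpp hoB1
    have hCD : tC ≠ tD := by
      intro h; rw [h] at hoC1
      exact hoD2 hoC1
    -- conclude
    have hsub : ({tA, tB, tC, tD} : Finset ℕ) ⊆ S := by
      intro t htm
      simp only [Finset.mem_insert, Finset.mem_singleton] at htm
      rcases htm with rfl | rfl | rfl | rfl <;> assumption
    have hcard4 : ({tA, tB, tC, tD} : Finset ℕ).card = 4 := by
      rw [Finset.card_insert_of_notMem (by simp [hAB, hAC, hAD]),
          Finset.card_insert_of_notMem (by simp [hBC, hBD]),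
          Finset.card_insert_of_notMem (by simp [hCD]),
          Finset.card_singleton]
    calc 4 = ({tA, tB, tC, tD} : Finset ℕ).card := hcard4.symm
      _ ≤ S.card := Finset.card_le_card hsub

  -- final counting
  have hsum_le : ∑ i ∈ SI, (sig i).factorization p ≤ α := by
    rw [← hvα]
    exact Finset.sum_le_sum_of_subset (Finset.subset_univ SI)
  have hSIle : 2 * SI.card ≤ α := by
    calc 2 * SI.card = ∑ _i ∈ SI, 2 := by rw [Finset.sum_const, smul_eq_mul, mul_comm]
      _ ≤ ∑ i ∈ SI, (sig i).factorization p :=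
          Finset.sum_le_sum (fun i hi => (hVS i hi) ▸ hc2 i hi)
      _ ≤ α := hsum_le
  have hup : S.card ≤ 4 := by rw [hcardS]; omega
  by_contra hne
  have hlt : S.card ≤ 3 := by omega
  have hTz : ∀ i ∈ Finset.univ.filter (fun i : Fin s => ¬ (q i ≡ 1 [MOD p])),
      (sig i).factorization p = 0 := by
    intro i hi
    have hni : i ∉ SI := by
      rw [hSIdef]
      intro hmem
      exact (Finset.mem_filter.mp hi).2 (Finset.mem_filter.mp hmem).2
    by_contra h
    exact absurd (hT i hni h) (by omega)
  have hαeq : α = ∑ i ∈ SI, (sig i).factorization p := by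
    rw [← hvα]
    have := Finset.sum_filter_add_sum_filter_not Finset.univ
      (fun i : Fin s => q i ≡ 1 [MOD p]) (fun i => (sig i).factorization p)
    rw [← this, Finset.sum_congr rfl hTz]
    simp [hSIdef]
  have hval2 : ∀ i ∈ SI, (sig i).factorization p = 2 := by
    intro i hi
    have h1 := hVS i hi
    have h2 := hc2 i hi
    have h3 := htower i hi
    omega
  have hfin : α = 2 * SI.card := by
    rw [hαeq, Finset.sum_congr rfl hval2, Finset.sum_const, smul_eq_mul, mul_comm]
  omega
end

section
/- Under the standing setup, write S = {q_1, q_2, q_3, q_4} with 2β_i + 1 = ℓ^2 for i = 1, 2, 3 and 2β_4 + 1 = ℓ^3. Then there exist a permutation (a, b, c) of (1, 2, 3) and positive integers h_a, h_b, h_c such that Φ_ℓ(q_4) = ℓ·q_a^{h_a}, Φ_{ℓ^2}(q_4) = ℓ·q_b^{h_b}, and Φ_{ℓ^3}(q_4) = ℓ·q_c^{h_c}. -/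
open Finset

noncomputable def Phi (d : ℕ) (x : ℤ) : ℤ := (Polynomial.cyclotomic d ℤ).eval x

/-! ### Auxiliary definitions and lemmas -/

/-- The geometric sum `1 + y + ⋯ + y^(p-1)`. -/
def Gs (p y : ℕ) : ℕ := ∑ i ∈ Finset.range p, y ^ i

lemma modEq_sum' {m : ℕ} {ι : Type*} (s : Finset ι) (f g : ι → ℕ)
    (h : ∀ i ∈ s, f i ≡ g i [MOD m]) :
    (∑ i ∈ s, f i) ≡ (∑ i ∈ s, g i) [MOD m] := by
  classical
  induction s using Finset.induction_on with
  | empty => rfl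
  | @insert a s ha ih =>
    rw [Finset.sum_insert ha, Finset.sum_insert ha]
    exact Nat.ModEq.add (h _ (Finset.mem_insert_self _ _))
      (ih fun i hi => h i (Finset.mem_insert_of_mem hi))

lemma Gs_congr {m y z : ℕ} (p : ℕ) (h : y ≡ z [MOD m]) : Gs p y ≡ Gs p z [MOD m] :=
  modEq_sum' _ _ _ (fun i _ => h.pow i)

lemma Gs_one (p : ℕ) : Gs p 1 = p := by simp [Gs]

lemma Gs_zero {p : ℕ} (hp : 0 < p) : Gs p 0 = 1 := by
  rw [Gs]
  rw [Finset.sum_eq_single_of_mem 0 (Finset.mem_range.mpr hp)]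
  · simp
  · intro i _ hi
    simp [zero_pow hi]

lemma Gs_cast (p y : ℕ) : ((Gs p y : ℕ) : ℤ) = ∑ i ∈ Finset.range p, (y : ℤ) ^ i := by
  rw [Gs]; push_cast; rfl

lemma Gs_mul_int (p y : ℕ) : ((Gs p y : ℕ) : ℤ) * ((y : ℤ) - 1) = (y : ℤ) ^ p - 1 := by
  rw [Gs_cast, geom_sum_mul]

lemma dvd_p_of_dvd_Gs {p r y : ℕ} (hy : y ≡ 1 [MOD r]) (hd : r ∣ Gs p y) : r ∣ p := by
  have h1 : Gs p y ≡ Gs p 1 [MOD r] := Gs_congr p hy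
  rw [Gs_one] at h1
  have h2 : (0 : ℕ) ≡ p [MOD r] := (Nat.modEq_zero_iff_dvd.mpr hd).symm.trans h1
  exact Nat.modEq_zero_iff_dvd.mp h2.symm

lemma prime_dvd_Gs {p r y : ℕ} (hp : p.Prime) (hr : r.Prime) (hd : r ∣ Gs p y) :
    r = p ∨ r ≡ 1 [MOD p] := by
  by_cases h1 : y ≡ 1 [MOD r]
  · exact Or.inl ((Nat.prime_dvd_prime_iff_eq hr hp).mp (dvd_p_of_dvd_Gs h1 hd))
  · right
    haveI := Fact.mk hr
    have h2 : (r : ℤ) ∣ (y : ℤ) ^ p - 1 := by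
      rw [← Gs_mul_int]
      exact Dvd.dvd.mul_right (Int.natCast_dvd_natCast.mpr hd) _
    have h3 : ((y : ZMod r)) ^ p = 1 := by
      have h4 : (((y : ℤ) ^ p - 1 : ℤ) : ZMod r) = 0 :=
        (ZMod.intCast_zmod_eq_zero_iff_dvd _ _).mpr h2
      push_cast at h4
      rwa [sub_eq_zero] at h4
    have hy0 : (y : ZMod r) ≠ 0 := by
      intro h0
      rw [h0, zero_pow hp.pos.ne'] at h3
      exact zero_ne_one h3
    have hord : orderOf ((y : ZMod r)) ∣ p := orderOf_dvd_of_pow_eq_one h3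
    rcases hp.eq_one_or_self_of_dvd _ hord with h | h
    · exfalso
      apply h1
      have h5 : (y : ZMod r) = 1 := orderOf_eq_one_iff.mp h
      have h6 : (y : ZMod r) = ((1 : ℕ) : ZMod r) := by rwa [Nat.cast_one]
      exact (ZMod.natCast_eq_natCast_iff _ _ _).mp h6
    · have hdvd : p ∣ r - 1 := h ▸ ZMod.orderOf_dvd_card_sub_one hy0
      exact ((Nat.modEq_iff_dvd' hr.one_le).mpr hdvd).symm

lemma Gs_modEq_p {p y : ℕ} (hp : p.Prime) (hpodd : Odd p) (h : y ≡ 1 [MOD p]) (hy : 1 ≤ y) :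
    Gs p y ≡ p [MOD p ^ 2] := by
  obtain ⟨k, hk⟩ := (Nat.modEq_iff_dvd' hy).mp h.symm
  have hyk : y = 1 + p * k := by omega
  subst hyk
  have hpow : ∀ i : ℕ, (1 + p * k) ^ i ≡ 1 + i * (p * k) [MOD p ^ 2] := by
    intro i
    induction i with
    | zero => simpa using Nat.ModEq.refl 1
    | succ i ih =>
      calc (1 + p * k) ^ (i + 1) = (1 + p * k) ^ i * (1 + p * k) := pow_succ _ _
        _ ≡ (1 + i * (p * k)) * (1 + p * k) [MOD p ^ 2] := ih.mul_right _
        _ = (1 + (i + 1) * (p * k)) + p ^ 2 * (i * k * k) := by ring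
        _ ≡ (1 + (i + 1) * (p * k)) + p ^ 2 * (0 * (i * k * k)) [MOD p ^ 2] :=
            Nat.ModEq.add_left _ ((Nat.modEq_zero_iff_dvd.mpr (dvd_mul_right _ _)).trans
              (by simp [Nat.ModEq]))
        _ = 1 + (i + 1) * (p * k) := by ring
  have h1 : Gs p (1 + p * k) ≡ ∑ i ∈ Finset.range p, (1 + i * (p * k)) [MOD p ^ 2] :=
    modEq_sum' _ _ _ (fun i _ => hpow i)
  have h2 : ∑ i ∈ Finset.range p, (1 + i * (p * k)) =
      p + (∑ i ∈ Finset.range p, i) * (p * k) := by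
    rw [Finset.sum_add_distrib, ← Finset.sum_mul]
    simp
  have h3 : p ∣ ∑ i ∈ Finset.range p, i := by
    have hg := Finset.sum_range_id_mul_two p
    have hdvd : p ∣ (∑ i ∈ Finset.range p, i) * 2 := hg ▸ dvd_mul_right p (p - 1)
    rcases (Nat.Prime.dvd_mul hp).mp hdvd with h | h
    · exact h
    · exfalso
      have hp2 : p = 2 := (Nat.prime_dvd_prime_iff_eq hp Nat.prime_two).mp h
      rw [hp2] at hpodd
      exact (by decide : ¬ Odd 2) hpodd
  obtain ⟨t, ht⟩ := h3
  calc Gs p (1 + p * k) ≡ p + (∑ i ∈ Finset.range p, i) * (p * k) [MOD p ^ 2] :=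
        h1.trans (by rw [h2])
    _ = p + p ^ 2 * (t * k) := by rw [ht]; ring
    _ ≡ p + p ^ 2 * (0 * (t * k)) [MOD p ^ 2] :=
        Nat.ModEq.add_left _ ((Nat.modEq_zero_iff_dvd.mpr (dvd_mul_right _ _)).trans
          (by simp [Nat.ModEq]))
    _ = p := by ring

lemma Gs_eq_p_mul {p y : ℕ} (hp : p.Prime) (hpodd : Odd p) (h : y ≡ 1 [MOD p]) (hy : 1 ≤ y) :
    ∃ n : ℕ, Gs p y = p * n ∧ ¬ p ∣ n := by
  have hm := Gs_modEq_p hp hpodd h hy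
  have hplt : p < p ^ 2 := by
    have h2 := hp.two_le
    nlinarith
  have hmod : Gs p y % p ^ 2 = p := by
    have := hm
    unfold Nat.ModEq at this
    rwa [Nat.mod_eq_of_lt hplt] at this
  refine ⟨p * (Gs p y / p ^ 2) + 1, ?_, ?_⟩
  · have hdm := Nat.div_add_mod (Gs p y) (p ^ 2)
    rw [hmod] at hdm
    calc Gs p y = p ^ 2 * (Gs p y / p ^ 2) + p := hdm.symm
      _ = p * (p * (Gs p y / p ^ 2) + 1) := by ring
  · intro hdvd
    have h1 : p ∣ 1 := (Nat.dvd_add_right ⟨Gs p y / p ^ 2, rfl⟩).mp hdvd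
    have h2 : p ≤ 1 := Nat.le_of_dvd one_pos h1
    have h3 := hp.two_le
    omega

lemma Gs_gt {p y : ℕ} (hp : 2 ≤ p) (hy : 3 ≤ y) : p < Gs p y := by
  obtain ⟨k, rfl⟩ : ∃ k, p = k + 1 := ⟨p - 1, by omega⟩
  have hk : 1 ≤ k := by omega
  have h1 : Gs (k + 1) y = ∑ i ∈ Finset.range k, y ^ i + y ^ k := by
    rw [Gs, Finset.sum_range_succ]
  have h2 : k ≤ ∑ i ∈ Finset.range k, y ^ i := by
    calc k = ∑ _i ∈ Finset.range k, 1 := by simp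
      _ ≤ _ := Finset.sum_le_sum (fun i _ => Nat.one_le_pow i y (by omega))
  have h3 : y ≤ y ^ k := Nat.le_self_pow (by omega) y
  rw [h1]
  linarith

lemma geom_factor {y : ℕ} (hy : 2 ≤ y) (m n : ℕ) :
    (∑ i ∈ Finset.range (m * n), y ^ i) =
      (∑ i ∈ Finset.range m, y ^ i) * (∑ j ∈ Finset.range n, (y ^ m) ^ j) := by
  have hy1 : (y : ℤ) - 1 ≠ 0 := sub_ne_zero.mpr (fun h => by
    have h2 : y = 1 := by exact_mod_cast h
    omega)
  have hZ : ((∑ i ∈ Finset.range (m * n), y ^ i : ℕ) : ℤ) =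
      ((∑ i ∈ Finset.range m, y ^ i : ℕ) : ℤ) *
        ((∑ j ∈ Finset.range n, (y ^ m) ^ j : ℕ) : ℤ) := by
    apply mul_right_cancel₀ hy1
    calc ((∑ i ∈ Finset.range (m * n), y ^ i : ℕ) : ℤ) * ((y : ℤ) - 1)
        = (∑ i ∈ Finset.range (m * n), (y : ℤ) ^ i) * ((y : ℤ) - 1) := by push_cast; ring
      _ = (y : ℤ) ^ (m * n) - 1 := geom_sum_mul _ _
      _ = ((y : ℤ) ^ m) ^ n - 1 := by rw [pow_mul]
      _ = (∑ j ∈ Finset.range n, ((y : ℤ) ^ m) ^ j) * ((y : ℤ) ^ m - 1) :=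
          (geom_sum_mul _ _).symm
      _ = (∑ j ∈ Finset.range n, ((y : ℤ) ^ m) ^ j) *
            ((∑ i ∈ Finset.range m, (y : ℤ) ^ i) * ((y : ℤ) - 1)) := by
          rw [geom_sum_mul (y : ℤ) m]
      _ = (((∑ i ∈ Finset.range m, y ^ i : ℕ) : ℤ) *
            ((∑ j ∈ Finset.range n, (y ^ m) ^ j : ℕ) : ℤ)) * ((y : ℤ) - 1) := by
          push_cast; ring
  exact_mod_cast hZ

lemma perm3_of_mem {α : Type*} {a b c x y z : α}
    (ha : a = x ∨ a = y ∨ a = z) (hb : b = x ∨ b = y ∨ b = z) (hc : c = x ∨ c = y ∨ c = z)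
    (hab : a ≠ b) (hac : a ≠ c) (hbc : b ≠ c) :
    [a, b, c].Perm [x, y, z] := by
  rcases ha with rfl | rfl | rfl <;> rcases hb with rfl | rfl | rfl <;>
    rcases hc with rfl | rfl | rfl <;>
    first
      | exact absurd rfl hab
      | exact absurd rfl hac
      | exact absurd rfl hbc
      | exact List.Perm.refl _
      | exact List.Perm.cons _ (List.Perm.swap _ _ _)
      | exact List.Perm.swap _ _ _
      | exact (List.Perm.cons _ (List.Perm.swap _ _ _)).trans (List.Perm.swap _ _ _)
      | exact (List.Perm.swap _ _ _).trans (List.Perm.cons _ (List.Perm.swap _ _ _))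
      | exact ((List.Perm.swap _ _ _).trans
          ((List.Perm.cons _ (List.Perm.swap _ _ _)).trans (List.Perm.swap _ _ _)))

set_option maxHeartbeats 1000000 in
theorem phi_values_of_q4
    (N p α s : ℕ) (q β : Fin s → ℕ)
    (hN : N = p ^ α * ∏ i, q i ^ (2 * β i))
    (hodd : Odd N)
    (hperf : ArithmeticFunction.sigma 1 N = 2 * N)
    (hp : p.Prime) (hpodd : Odd p)
    (hq : ∀ i, (q i).Prime) (hqodd : ∀ i, Odd (q i))
    (hinj : Function.Injective q)
    (hpq : ∀ i, p ≠ q i)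
    (hα4 : α % 4 = 1) (hp4 : p % 4 = 1)
    (hαpos : 0 < α) (hβpos : ∀ i, 0 < β i)
    (hk : ∀ i, p ^ 2 ∣ 2 * β i + 1)
    (hnd : ¬ p ^ 10 ∣ N)
    (i₁ i₂ i₃ i₄ : Fin s)
    (hij : i₁ ≠ i₂ ∧ i₁ ≠ i₃ ∧ i₁ ≠ i₄ ∧ i₂ ≠ i₃ ∧ i₂ ≠ i₄ ∧ i₃ ≠ i₄)
    (hS : ∀ i, q i ≡ 1 [MOD p] ↔ i ∈ ({i₁, i₂, i₃, i₄} : Finset (Fin s)))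
    (hβ1 : 2 * β i₁ + 1 = p ^ 2) (hβ2 : 2 * β i₂ + 1 = p ^ 2)
    (hβ3 : 2 * β i₃ + 1 = p ^ 2) (hβ4 : 2 * β i₄ + 1 = p ^ 3)
    :
    ∃ a b c : Fin s, [a, b, c].Perm [i₁, i₂, i₃] ∧
      ∃ hₐ h_b h_c : ℕ, 0 < hₐ ∧ 0 < h_b ∧ 0 < h_c ∧
        Phi p (q i₄) = p * (q a : ℤ) ^ hₐ ∧
        Phi (p ^ 2) (q i₄) = p * (q b : ℤ) ^ h_b ∧
        Phi (p ^ 3) (q i₄) = p * (q c : ℤ) ^ h_c := by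
  classical
  obtain ⟨h12, h13, h14, h23, h24, h34⟩ := hij
  have hp2 : 2 ≤ p := hp.two_le
  have hpne2 : p ≠ 2 := by rintro rfl; exact (by decide : ¬ Odd 2) hpodd
  have hp3 : 3 ≤ p := by omega
  set Q := q i₄ with hQdef
  have hQp : Q.Prime := hq i₄
  have hQne2 : Q ≠ 2 := by
    intro h
    have := hqodd i₄
    rw [← hQdef, h] at this
    exact (by decide : ¬ Odd 2) this
  have hQ3 : 3 ≤ Q := by have := hQp.two_le; omega
  have hQ1 : Q ≡ 1 [MOD p] := (hS i₄).mpr (by simp)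
  have hE0 : Q ^ p ^ 0 = Q := by norm_num
  have hE1 : Q ^ p ^ 1 = Q ^ p := by rw [pow_one]
  have hE2 : (Q ^ p) ^ p = Q ^ p ^ 2 := by rw [← pow_mul, ← sq]
  -- the sigma value of the q i₄ part
  have hσQ : ArithmeticFunction.sigma 1 (Q ^ (2 * β i₄)) =
      Gs p Q * (Gs p (Q ^ p) * Gs p (Q ^ p ^ 2)) := by
    rw [ArithmeticFunction.sigma_one_apply, Nat.sum_divisors_prime_pow hQp, hβ4]
    have h1 : p ^ 3 = p * p ^ 2 := by ring
    have h2 : p ^ 2 = p * p := sq p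
    rw [h1, geom_factor (by omega) p (p ^ 2), h2,
      geom_factor (show 2 ≤ Q ^ p from le_trans (by omega) (Nat.le_self_pow (by omega) Q)) p p,
      hE2]
    rw [← h2]
    rfl
  have hM : N = Q ^ (2 * β i₄) *
      (p ^ α * ∏ i ∈ Finset.univ.erase i₄, q i ^ (2 * β i)) := by
    rw [hN, ← Finset.mul_prod_erase Finset.univ (fun i => q i ^ (2 * β i)) (Finset.mem_univ i₄)]
    ring
  have hcop : Nat.Coprime (Q ^ (2 * β i₄))
      (p ^ α * ∏ i ∈ Finset.univ.erase i₄, q i ^ (2 * β i)) := by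
    apply Nat.Coprime.pow_left
    rw [Nat.Prime.coprime_iff_not_dvd hQp]
    intro hdvd
    rcases (Nat.Prime.dvd_mul hQp).mp hdvd with h | h
    · exact hpq i₄ ((Nat.prime_dvd_prime_iff_eq hQp hp).mp (hQp.dvd_of_dvd_pow h)).symm
    · obtain ⟨j, hj, hjd⟩ := (hQp.prime.dvd_finset_prod_iff _).mp h
      have h1 : Q = q j := (Nat.prime_dvd_prime_iff_eq hQp (hq j)).mp (hQp.dvd_of_dvd_pow hjd)
      exact (Finset.mem_erase.mp hj).1 (hinj h1).symm
  have h2N : ArithmeticFunction.sigma 1 (Q ^ (2 * β i₄)) *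
      ArithmeticFunction.sigma 1 (p ^ α * ∏ i ∈ Finset.univ.erase i₄, q i ^ (2 * β i)) =
      2 * N := by
    rw [← ArithmeticFunction.isMultiplicative_sigma.map_mul_of_coprime hcop, ← hM, hperf]
  have hσ2N : Gs p Q * (Gs p (Q ^ p) * Gs p (Q ^ p ^ 2)) ∣ 2 * N :=
    ⟨_, by rw [← h2N, hσQ]⟩
  have hdvd0 : Gs p (Q ^ p ^ 0) ∣ 2 * N := by
    rw [hE0]; exact (dvd_mul_right _ _).trans hσ2N
  have hdvd1 : Gs p (Q ^ p ^ 1) ∣ 2 * N := by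
    rw [hE1]; exact ((dvd_mul_right _ _).mul_left _).trans hσ2N
  have hdvd2 : Gs p (Q ^ p ^ 2) ∣ 2 * N :=
    ((dvd_mul_left _ _).mul_left _).trans hσ2N
  -- a prime dividing two of the geometric sums must be p
  have hdisj : ∀ e f : ℕ, e < f → ∀ r : ℕ, r.Prime →
      r ∣ Gs p (Q ^ p ^ e) → r ∣ Gs p (Q ^ p ^ f) → r = p := by
    intro e f hef r hr hd1 hd2
    have hint1 : (r : ℤ) ∣ (Q : ℤ) ^ p ^ (e + 1) - 1 := by
      have h1 : (r : ℤ) ∣ ((Gs p (Q ^ p ^ e) : ℕ) : ℤ) * (((Q ^ p ^ e : ℕ) : ℤ) - 1) :=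
        Dvd.dvd.mul_right (Int.natCast_dvd_natCast.mpr hd1) _
      rw [Gs_mul_int] at h1
      have h2 : (((Q ^ p ^ e : ℕ) : ℤ)) ^ p = (Q : ℤ) ^ p ^ (e + 1) := by
        push_cast
        rw [← pow_mul, ← pow_succ]
      rwa [h2] at h1
    have hint2 : (r : ℤ) ∣ (Q : ℤ) ^ p ^ f - 1 := by
      refine hint1.trans ?_
      have h2 : ((Q : ℤ) ^ p ^ (e + 1)) ^ p ^ (f - (e + 1)) = (Q : ℤ) ^ p ^ f := by
        rw [← pow_mul, ← pow_add, show e + 1 + (f - (e + 1)) = f from by omega]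
      calc (Q : ℤ) ^ p ^ (e + 1) - 1
          ∣ ((Q : ℤ) ^ p ^ (e + 1)) ^ p ^ (f - (e + 1)) - 1 ^ p ^ (f - (e + 1)) :=
            sub_dvd_pow_sub_pow _ _ _
        _ = (Q : ℤ) ^ p ^ f - 1 := by rw [h2, one_pow]
    have hmod : Q ^ p ^ f ≡ 1 [MOD r] := by
      rw [Nat.modEq_iff_dvd]
      push_cast
      rw [show (1 : ℤ) - (Q : ℤ) ^ p ^ f = -((Q : ℤ) ^ p ^ f - 1) by ring]
      exact (dvd_neg).mpr hint2
    exact (Nat.prime_dvd_prime_iff_eq hr hp).mp (dvd_p_of_dvd_Gs hmod hd2)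
  -- main structural fact about each geometric sum
  have key : ∀ e : ℕ, Gs p (Q ^ p ^ e) ∣ 2 * N →
      ∃ n : ℕ, Gs p (Q ^ p ^ e) = p * n ∧ ¬ p ∣ n ∧ 1 < n ∧
        ∀ r : ℕ, r.Prime → r ∣ n → (r = q i₁ ∨ r = q i₂ ∨ r = q i₃) := by
    intro e hdvd2N
    have hY1 : Q ^ p ^ e ≡ 1 [MOD p] := by simpa using hQ1.pow (p ^ e)
    have hY3 : 3 ≤ Q ^ p ^ e :=
      le_trans hQ3 (Nat.le_self_pow (pow_pos hp.pos e).ne' Q)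
    obtain ⟨n, hGn, hpn⟩ := Gs_eq_p_mul hp hpodd hY1 (by omega)
    have hggt : p < Gs p (Q ^ p ^ e) := Gs_gt hp2 hY3
    have hn0 : n ≠ 0 := by rintro rfl; rw [mul_zero] at hGn; omega
    have hn1 : n ≠ 1 := by rintro rfl; rw [mul_one] at hGn; omega
    refine ⟨n, hGn, hpn, by omega, ?_⟩
    intro r hr hrn
    have hrG : r ∣ Gs p (Q ^ p ^ e) := hGn ▸ hrn.mul_left p
    have hrne_p : r ≠ p := fun h => hpn (h ▸ hrn)
    have hr1p : r ≡ 1 [MOD p] := (prime_dvd_Gs hp hr hrG).resolve_left hrne_p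
    have hrne2 : r ≠ 2 := by
      rintro rfl
      have h21 : (2 : ℕ) % p = 1 % p := hr1p
      rw [Nat.mod_eq_of_lt (by omega), Nat.mod_eq_of_lt (by omega)] at h21
      omega
    have hrN : r ∣ N := by
      rcases (Nat.Prime.dvd_mul hr).mp (hrG.trans hdvd2N) with h | h
      · exact absurd ((Nat.prime_dvd_prime_iff_eq hr Nat.prime_two).mp h) hrne2
      · exact h
    have hrN' : r ∣ p ^ α * ∏ i, q i ^ (2 * β i) := hN ▸ hrN
    rcases (Nat.Prime.dvd_mul hr).mp hrN' with h | h
    · exact absurd ((Nat.prime_dvd_prime_iff_eq hr hp).mp (hr.dvd_of_dvd_pow h)) hrne_p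
    · obtain ⟨j, _, hjd⟩ := (hr.prime.dvd_finset_prod_iff _).mp h
      have hrqj : r = q j := (Nat.prime_dvd_prime_iff_eq hr (hq j)).mp (hr.dvd_of_dvd_pow hjd)
      have hjmem : j ∈ ({i₁, i₂, i₃, i₄} : Finset (Fin s)) := (hS j).mp (hrqj ▸ hr1p)
      have hjne4 : j ≠ i₄ := by
        rintro rfl
        have hmodQ : Gs p (Q ^ p ^ e) ≡ Gs p 0 [MOD Q] :=
          Gs_congr p (Nat.modEq_zero_iff_dvd.mpr (dvd_pow_self Q (pow_pos hp.pos e).ne'))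
        rw [Gs_zero hp.pos] at hmodQ
        have hQG : Q ∣ Gs p (Q ^ p ^ e) := by
          have hrQ : r = Q := hrqj.trans hQdef.symm
          rwa [hrQ] at hrG
        have h01 : (0 : ℕ) ≡ 1 [MOD Q] :=
          (Nat.modEq_zero_iff_dvd.mpr hQG).symm.trans hmodQ
        have hQd1 : Q ∣ 1 := Nat.modEq_zero_iff_dvd.mp h01.symm
        have := Nat.le_of_dvd one_pos hQd1
        omega
      simp only [Finset.mem_insert, Finset.mem_singleton] at hjmem
      rcases hjmem with h' | h' | h' | h'
      · exact Or.inl (by rw [hrqj, h'])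
      · exact Or.inr (Or.inl (by rw [hrqj, h']))
      · exact Or.inr (Or.inr (by rw [hrqj, h']))
      · exact absurd h' hjne4
  -- instantiate at e = 0, 1, 2
  obtain ⟨n₀, hGn₀, hpn₀, h1n₀, hprime₀⟩ := key 0 hdvd0
  obtain ⟨n₁, hGn₁, hpn₁, h1n₁, hprime₁⟩ := key 1 hdvd1
  obtain ⟨n₂, hGn₂, hpn₂, h1n₂, hprime₂⟩ := key 2 hdvd2
  obtain ⟨r₀, hr₀, hr₀d⟩ := Nat.exists_prime_and_dvd (show n₀ ≠ 1 by omega)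
  obtain ⟨r₁, hr₁, hr₁d⟩ := Nat.exists_prime_and_dvd (show n₁ ≠ 1 by omega)
  obtain ⟨r₂, hr₂, hr₂d⟩ := Nat.exists_prime_and_dvd (show n₂ ≠ 1 by omega)
  have hd₀ : ∀ r : ℕ, r ∣ n₀ → r ∣ Gs p (Q ^ p ^ 0) := fun r hr' => hGn₀ ▸ hr'.mul_left p
  have hd₁ : ∀ r : ℕ, r ∣ n₁ → r ∣ Gs p (Q ^ p ^ 1) := fun r hr' => hGn₁ ▸ hr'.mul_left p
  have hd₂ : ∀ r : ℕ, r ∣ n₂ → r ∣ Gs p (Q ^ p ^ 2) := fun r hr' => hGn₂ ▸ hr'.mul_left p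
  have hne01 : ∀ u : ℕ, u.Prime → u ∣ n₀ → u ∣ n₁ → False := fun u hu h0 h1' =>
    hpn₀ ((hdisj 0 1 (by omega) u hu (hd₀ u h0) (hd₁ u h1')) ▸ h0)
  have hne02 : ∀ u : ℕ, u.Prime → u ∣ n₀ → u ∣ n₂ → False := fun u hu h0 h2' =>
    hpn₀ ((hdisj 0 2 (by omega) u hu (hd₀ u h0) (hd₂ u h2')) ▸ h0)
  have hne12 : ∀ u : ℕ, u.Prime → u ∣ n₁ → u ∣ n₂ → False := fun u hu h1' h2' =>
    hpn₁ ((hdisj 1 2 (by omega) u hu (hd₁ u h1') (hd₂ u h2')) ▸ h1')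
  have e₀ := hprime₀ r₀ hr₀ hr₀d
  have e₁ := hprime₁ r₁ hr₁ hr₁d
  have e₂ := hprime₂ r₂ hr₂ hr₂d
  have hr01 : r₀ ≠ r₁ := fun h => hne01 r₀ hr₀ hr₀d (h ▸ hr₁d)
  have hr02 : r₀ ≠ r₂ := fun h => hne02 r₀ hr₀ hr₀d (h ▸ hr₂d)
  have hr12 : r₁ ≠ r₂ := fun h => hne12 r₁ hr₁ hr₁d (h ▸ hr₂d)
  have huniq₀ : ∀ r : ℕ, r.Prime → r ∣ n₀ → r = r₀ := by
    intro r hr hrd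
    by_contra hne
    have er := hprime₀ r hr hrd
    have hA : r ≠ r₁ := fun h => hne01 r hr hrd (h ▸ hr₁d)
    have hB : r ≠ r₂ := fun h => hne02 r hr hrd (h ▸ hr₂d)
    omega
  have huniq₁ : ∀ r : ℕ, r.Prime → r ∣ n₁ → r = r₁ := by
    intro r hr hrd
    by_contra hne
    have er := hprime₁ r hr hrd
    have hA : r ≠ r₀ := fun h => hne01 r hr (h ▸ hr₀d) hrd
    have hB : r ≠ r₂ := fun h => hne12 r hr hrd (h ▸ hr₂d)
    omega
  have huniq₂ : ∀ r : ℕ, r.Prime → r ∣ n₂ → r = r₂ := by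
    intro r hr hrd
    by_contra hne
    have er := hprime₂ r hr hrd
    have hA : r ≠ r₀ := fun h => hne02 r hr (h ▸ hr₀d) hrd
    have hB : r ≠ r₁ := fun h => hne12 r hr (h ▸ hr₁d) hrd
    omega
  obtain ⟨k₀, hk₀⟩ : ∃ k, n₀ = r₀ ^ k :=
    ⟨_, Nat.eq_prime_pow_of_unique_prime_dvd (by omega) (fun {d} hd hdd => huniq₀ d hd hdd)⟩
  obtain ⟨k₁, hk₁⟩ : ∃ k, n₁ = r₁ ^ k :=
    ⟨_, Nat.eq_prime_pow_of_unique_prime_dvd (by omega) (fun {d} hd hdd => huniq₁ d hd hdd)⟩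
  obtain ⟨k₂, hk₂⟩ : ∃ k, n₂ = r₂ ^ k :=
    ⟨_, Nat.eq_prime_pow_of_unique_prime_dvd (by omega) (fun {d} hd hdd => huniq₂ d hd hdd)⟩
  have hk₀pos : 0 < k₀ := by
    rcases Nat.eq_zero_or_pos k₀ with h | h
    · subst h; rw [pow_zero] at hk₀; omega
    · exact h
  have hk₁pos : 0 < k₁ := by
    rcases Nat.eq_zero_or_pos k₁ with h | h
    · subst h; rw [pow_zero] at hk₁; omega
    · exact h
  have hk₂pos : 0 < k₂ := by
    rcases Nat.eq_zero_or_pos k₂ with h | h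
    · subst h; rw [pow_zero] at hk₂; omega
    · exact h
  obtain ⟨a, hamem, hra⟩ : ∃ a : Fin s, (a = i₁ ∨ a = i₂ ∨ a = i₃) ∧ r₀ = q a := by
    rcases e₀ with h | h | h
    · exact ⟨i₁, Or.inl rfl, h⟩
    · exact ⟨i₂, Or.inr (Or.inl rfl), h⟩
    · exact ⟨i₃, Or.inr (Or.inr rfl), h⟩
  obtain ⟨b, hbmem, hrb⟩ : ∃ b : Fin s, (b = i₁ ∨ b = i₂ ∨ b = i₃) ∧ r₁ = q b := by
    rcases e₁ with h | h | h
    · exact ⟨i₁, Or.inl rfl, h⟩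
    · exact ⟨i₂, Or.inr (Or.inl rfl), h⟩
    · exact ⟨i₃, Or.inr (Or.inr rfl), h⟩
  obtain ⟨c, hcmem, hrc⟩ : ∃ c : Fin s, (c = i₁ ∨ c = i₂ ∨ c = i₃) ∧ r₂ = q c := by
    rcases e₂ with h | h | h
    · exact ⟨i₁, Or.inl rfl, h⟩
    · exact ⟨i₂, Or.inr (Or.inl rfl), h⟩
    · exact ⟨i₃, Or.inr (Or.inr rfl), h⟩
  have hab : a ≠ b := fun h => hr01 (by rw [hra, hrb, h])
  have hac : a ≠ c := fun h => hr02 (by rw [hra, hrc, h])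
  have hbc : b ≠ c := fun h => hr12 (by rw [hrb, hrc, h])
  -- evaluate the cyclotomic polynomials
  have hPhiGen : ∀ e : ℕ, (Polynomial.cyclotomic (p ^ (e + 1)) ℤ).eval ((Q : ℕ) : ℤ) =
      ((Gs p (Q ^ p ^ e) : ℕ) : ℤ) := by
    intro e
    rw [Polynomial.cyclotomic_prime_pow_eq_geom_sum hp, Gs_cast]
    simp only [Polynomial.eval_finset_sum, Polynomial.eval_pow, Polynomial.eval_X]
    push_cast
    rfl
  haveI := Fact.mk hp
  refine ⟨a, b, c, perm3_of_mem hamem hbmem hcmem hab hac hbc,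
    k₀, k₁, k₂, hk₀pos, hk₁pos, hk₂pos, ?_, ?_, ?_⟩
  · have h1 := hPhiGen 0
    rw [zero_add, pow_one] at h1
    simp only [Phi]
    rw [h1, hGn₀, hk₀, hra]
    push_cast
    ring
  · have h1 := hPhiGen 1
    simp only [Phi]
    rw [show (2 : ℕ) = 1 + 1 from rfl, h1, hGn₁, hk₁, hrb]
    push_cast
    ring
  · have h1 := hPhiGen 2
    simp only [Phi]
    rw [show (3 : ℕ) = 2 + 1 from rfl, h1, hGn₂, hk₂, hrc]
    push_cast
    ring
end

section
/- Under the standing setup, with S = {q_1, q_2, q_3, q_4}, 2β_i + 1 = ℓ^2 for i = 1, 2, 3, 2β_4 + 1 = ℓ^3, Φ_{ℓ^3}(q_4) = ℓ·q_1^{h_1}, and with γ ∈ {1, 2} and positive integers e_2, e_3, e_4 with ℓ | e_4 such that Φ_{ℓ^γ}(q_1) = ℓ·q_3^{e_3} and Φ_{ℓ^{3−γ}}(q_1) = ℓ·q_2^{e_2}·q_4^{e_4}, necessarily γ = 1; that is, Φ_ℓ(q_1) = ℓ·q_3^{e_3} and Φ_{ℓ^2}(q_1) = ℓ·q_2^{e_2}·q_4^{e_4}.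 -/
open Finset

theorem gamma_eq_one
    (N p α s : ℕ) (q β : Fin s → ℕ)
    (hN : N = p ^ α * ∏ i, q i ^ (2 * β i))
    (hodd : Odd N)
    (hperf : ArithmeticFunction.sigma 1 N = 2 * N)
    (hp : p.Prime) (hpodd : Odd p)
    (hq : ∀ i, (q i).Prime) (hqodd : ∀ i, Odd (q i))
    (hinj : Function.Injective q)
    (hpq : ∀ i, p ≠ q i)
    (hα4 : α % 4 = 1) (hp4 : p % 4 = 1)
    (hαpos : 0 < α) (hβpos : ∀ i, 0 < β i)
    (hk : ∀ i, p ^ 2 ∣ 2 * β i + 1)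
    (hnd : ¬ p ^ 10 ∣ N)
    (i₁ i₂ i₃ i₄ : Fin s)
    (hij : i₁ ≠ i₂ ∧ i₁ ≠ i₃ ∧ i₁ ≠ i₄ ∧ i₂ ≠ i₃ ∧ i₂ ≠ i₄ ∧ i₃ ≠ i₄)
    (hS : ∀ i, q i ≡ 1 [MOD p] ↔ i ∈ ({i₁, i₂, i₃, i₄} : Finset (Fin s)))
    (hβ1 : 2 * β i₁ + 1 = p ^ 2) (hβ2 : 2 * β i₂ + 1 = p ^ 2)
    (hβ3 : 2 * β i₃ + 1 = p ^ 2) (hβ4 : 2 * β i₄ + 1 = p ^ 3)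
    (h₁ : ℕ) (hh₁ : 0 < h₁)
    (hΦ3 : Phi (p ^ 3) (q i₄) = p * (q i₁ : ℤ) ^ h₁)
    (γ e₂ e₃ e₄ : ℕ) (hγ : γ = 1 ∨ γ = 2)
    (he₂ : 0 < e₂) (he₃ : 0 < e₃) (he₄ : 0 < e₄) (hℓe₄ : p ∣ e₄)
    (hA : Phi (p ^ γ) (q i₁) = p * (q i₃ : ℤ) ^ e₃)
    (hB : Phi (p ^ (3 - γ)) (q i₁) = p * (q i₂ : ℤ) ^ e₂ * (q i₄ : ℤ) ^ e₄) :
    γ = 1 := by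
  rcases hγ with rfl | rfl
  · rfl
  exfalso
  haveI : Fact p.Prime := ⟨hp⟩
  have hp2 : 2 ≤ p := hp.two_le
  -- q i₄ > p
  have hmem : i₄ ∈ ({i₁, i₂, i₃, i₄} : Finset (Fin s)) := by simp
  have hmod : q i₄ ≡ 1 [MOD p] := (hS i₄).2 hmem
  have hq4two : 2 ≤ q i₄ := (hq i₄).two_le
  have hq4gt : p < q i₄ := by
    have h1 : p ∣ q i₄ - 1 := (Nat.modEq_iff_dvd' (by omega)).mp hmod.symm
    have h2 : p ≤ q i₄ - 1 := Nat.le_of_dvd (by omega) h1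
    omega
  have hpe4 : p ≤ e₄ := Nat.le_of_dvd he₄ hℓe₄
  have h31 : p ^ (3 - 2) = p := by norm_num
  rw [h31] at hB
  set n : ℤ := (q i₄ : ℤ) ^ p with hn
  -- n ∣ q i₁ ^ p - 1
  have hPhiP : Phi p (q i₁) = ∑ i ∈ Finset.range p, (q i₁ : ℤ) ^ i := by
    unfold Phi
    rw [Polynomial.cyclotomic_prime]
    simp
  have hdvd1 : Phi p (q i₁) ∣ (q i₁ : ℤ) ^ p - 1 := by
    rw [hPhiP]
    exact ⟨(q i₁ : ℤ) - 1, (geom_sum_mul _ _).symm⟩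
  have hq4Phi : n ∣ Phi p (q i₁) := by
    rw [hB, hn]
    exact Dvd.dvd.mul_left (pow_dvd_pow _ hpe4) _
  have hdvdA : n ∣ (q i₁ : ℤ) ^ p - 1 := hq4Phi.trans hdvd1
  -- n ∣ p * q i₁ ^ h₁ - 1
  have hPhi3 : Phi (p ^ 3) (q i₄) = ∑ i ∈ Finset.range p, ((q i₄ : ℤ) ^ p ^ 2) ^ i := by
    unfold Phi
    have h3 : (3 : ℕ) = 2 + 1 := rfl
    rw [h3, Polynomial.cyclotomic_prime_pow_eq_geom_sum hp]
    simp [Polynomial.eval_finset_sum]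
  have hdvdB : n ∣ (p : ℤ) * (q i₁ : ℤ) ^ h₁ - 1 := by
    rw [← hΦ3, hPhi3]
    obtain ⟨m, hm⟩ : ∃ m, p = m + 1 := ⟨p - 1, by omega⟩
    rw [hm, geom_sum_succ, add_sub_cancel_right, ← hm]
    have hpp2 : p ≤ p ^ 2 := by nlinarith
    exact ((pow_dvd_pow (q i₄ : ℤ) hpp2).mul_right _)
  -- now conclude n ∣ p^p - 1
  have hmB : ((p : ℤ) * (q i₁ : ℤ) ^ h₁) ≡ 1 [ZMOD n] :=
    (Int.modEq_iff_dvd.mpr hdvdB).symm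
  have hmA : ((q i₁ : ℤ) ^ p) ≡ 1 [ZMOD n] :=
    (Int.modEq_iff_dvd.mpr hdvdA).symm
  have key : ((p : ℤ) ^ p) ≡ 1 [ZMOD n] := by
    have h1 : ((p : ℤ) * (q i₁ : ℤ) ^ h₁) ^ p ≡ 1 ^ p [ZMOD n] := hmB.pow p
    have h2 : ((q i₁ : ℤ) ^ p) ^ h₁ ≡ 1 ^ h₁ [ZMOD n] := hmA.pow h₁
    have e1 : ((p : ℤ) * (q i₁ : ℤ) ^ h₁) ^ p = (p : ℤ) ^ p * ((q i₁ : ℤ) ^ p) ^ h₁ := by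
      ring
    have h3 : (p : ℤ) ^ p * ((q i₁ : ℤ) ^ p) ^ h₁ ≡ (p : ℤ) ^ p * 1 [ZMOD n] :=
      (Int.ModEq.refl _).mul (by rw [one_pow] at h2; exact h2)
    calc (p : ℤ) ^ p = (p : ℤ) ^ p * 1 := by ring
      _ ≡ (p : ℤ) ^ p * ((q i₁ : ℤ) ^ p) ^ h₁ [ZMOD n] := h3.symm
      _ = ((p : ℤ) * (q i₁ : ℤ) ^ h₁) ^ p := e1.symm
      _ ≡ 1 ^ p [ZMOD n] := h1
      _ = 1 := one_pow p
  have hfin : n ∣ (p : ℤ) ^ p - 1 := Int.modEq_iff_dvd.mp key.symm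
  have hpos : (0 : ℤ) < (p : ℤ) ^ p - 1 := by
    have : (1 : ℤ) < (p : ℤ) ^ p :=
      one_lt_pow₀ (by exact_mod_cast hp.one_lt) (by omega)
    omega
  have hle : n ≤ (p : ℤ) ^ p - 1 := Int.le_of_dvd hpos hfin
  have hlt : (p : ℤ) ^ p < n := by
    rw [hn]
    exact pow_lt_pow_left₀ (by exact_mod_cast hq4gt) (by positivity) (by omega)
  omega
end

section
/- Under the standing setup, with S = {q_1, q_2, q_3, q_4}, 2β_i + 1 = ℓ^2 for i = 1, 2, 3, 2β_4 + 1 = ℓ^3, Φ_{ℓ^3}(q_4) = ℓ·q_1^{h_1}, and with positive integers e_2, e_3, e_4 satisfying Φ_ℓ(q_1) = ℓ·q_3^{e_3}, Φ_{ℓ^2}(q_1) = ℓ·q_2^{e_2}·q_4^{e_4}, and ℓ | e_4, one has q_4^ℓ divides Φ_{ℓ^2}(ℓ) and q_4 ≡ 1 (mod ℓ^2). -/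
open Finset

/-- If `d ∣ y - 1` then `d` divides `(∑ i < n, y^i) - n`. -/
lemma aux_dvd_geom_sum_sub (d y : ℤ) (n : ℕ) (h : d ∣ y - 1) :
    d ∣ (∑ i ∈ Finset.range n, y ^ i) - (n : ℤ) := by
  have hrw : (∑ i ∈ Finset.range n, y ^ i) - (n : ℤ)
      = ∑ i ∈ Finset.range n, (y ^ i - 1) := by
    rw [Finset.sum_sub_distrib, Finset.sum_const, Finset.card_range]
    push_cast
    ring
  rw [hrw]
  refine Finset.dvd_sum fun i _ => h.trans ?_
  simpa using sub_dvd_pow_sub_pow y 1 i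

/-- Evaluation of the cyclotomic polynomial at prime-power index as a geometric sum. -/
lemma aux_phi_eval (p n : ℕ) (hp : p.Prime) (x : ℤ) :
    Phi (p ^ (n + 1)) x = ∑ i ∈ Finset.range p, (x ^ p ^ n) ^ i := by
  unfold Phi
  rw [Polynomial.cyclotomic_prime_pow_eq_geom_sum hp]
  simp [Polynomial.eval_finset_sum]

lemma aux_phi_mul (p : ℕ) (hp : p.Prime) (x : ℤ) :
    x ^ p ^ 2 - 1 = (x ^ p - 1) * Phi (p ^ 2) x := by
  have h := geom_sum_mul (x ^ p) p
  have he : Phi (p ^ 2) x = ∑ i ∈ Finset.range p, (x ^ p) ^ i := by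
    have h2 := aux_phi_eval p 1 hp x
    norm_num at h2
    exact h2
  rw [he, mul_comm, h, ← pow_mul, pow_two]

theorem q4_pow_dvd_phi
    (N p α s : ℕ) (q β : Fin s → ℕ)
    (hN : N = p ^ α * ∏ i, q i ^ (2 * β i))
    (hodd : Odd N)
    (hperf : ArithmeticFunction.sigma 1 N = 2 * N)
    (hp : p.Prime) (hpodd : Odd p)
    (hq : ∀ i, (q i).Prime) (hqodd : ∀ i, Odd (q i))
    (hinj : Function.Injective q)
    (hpq : ∀ i, p ≠ q i)
    (hα4 : α % 4 = 1) (hp4 : p % 4 = 1)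
    (hαpos : 0 < α) (hβpos : ∀ i, 0 < β i)
    (hk : ∀ i, p ^ 2 ∣ 2 * β i + 1)
    (hnd : ¬ p ^ 10 ∣ N)
    (i₁ i₂ i₃ i₄ : Fin s)
    (hij : i₁ ≠ i₂ ∧ i₁ ≠ i₃ ∧ i₁ ≠ i₄ ∧ i₂ ≠ i₃ ∧ i₂ ≠ i₄ ∧ i₃ ≠ i₄)
    (hS : ∀ i, q i ≡ 1 [MOD p] ↔ i ∈ ({i₁, i₂, i₃, i₄} : Finset (Fin s)))
    (hβ1 : 2 * β i₁ + 1 = p ^ 2) (hβ2 : 2 * β i₂ + 1 = p ^ 2)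
    (hβ3 : 2 * β i₃ + 1 = p ^ 2) (hβ4 : 2 * β i₄ + 1 = p ^ 3)
    (h₁ : ℕ) (hh₁ : 0 < h₁)
    (hΦ3 : Phi (p ^ 3) (q i₄) = p * (q i₁ : ℤ) ^ h₁)
    (e₂ e₃ e₄ : ℕ) (he₂ : 0 < e₂) (he₃ : 0 < e₃) (he₄ : 0 < e₄) (hℓe₄ : p ∣ e₄)
    (hA : Phi p (q i₁) = p * (q i₃ : ℤ) ^ e₃)
    (hB : Phi (p ^ 2) (q i₁) = p * (q i₂ : ℤ) ^ e₂ * (q i₄ : ℤ) ^ e₄) :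
    (q i₄ : ℤ) ^ p ∣ Phi (p ^ 2) p ∧ q i₄ ≡ 1 [MOD p ^ 2] := by
  have hQprime : Prime ((q i₄ : ℤ)) := Nat.prime_iff_prime_int.mp (hq i₄)
  -- q i₄ > p
  have hQgtp : p < q i₄ := by
    have hmod : q i₄ % p = 1 % p := hS i₄ |>.mpr (by simp)
    have h1p : 1 % p = 1 := Nat.mod_eq_of_lt hp.one_lt
    rcases lt_trichotomy (q i₄) p with h | h | h
    · rw [Nat.mod_eq_of_lt h, h1p] at hmod
      exact absurd hmod (Nat.Prime.ne_one (hq i₄))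
    · exact absurd h.symm (hpq i₄)
    · exact h
  -- q i₄ does not divide p
  have hQnp : ¬ ((q i₄ : ℤ)) ∣ (p : ℤ) := by
    intro hcon
    have := Int.le_of_dvd (by exact_mod_cast hp.pos) hcon
    have : q i₄ ≤ p := by exact_mod_cast this
    omega
  -- Step 2 : (q i₄)^p divides (q i₁)^(p^2) - 1
  have hPhiDvd : Phi (p ^ 2) ((q i₁ : ℤ)) ∣ (q i₁ : ℤ) ^ p ^ 2 - 1 :=
    Dvd.intro_left _ (aux_phi_mul p hp _).symm
  have hQe4 : ((q i₄ : ℤ)) ^ e₄ ∣ Phi (p ^ 2) ((q i₁ : ℤ)) :=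
    ⟨(p : ℤ) * (q i₂ : ℤ) ^ e₂, by rw [hB]; ring⟩
  have hple4 : p ≤ e₄ := Nat.le_of_dvd he₄ hℓe₄
  have h2 : ((q i₄ : ℤ)) ^ p ∣ (q i₁ : ℤ) ^ p ^ 2 - 1 :=
    (pow_dvd_pow _ hple4).trans (hQe4.trans hPhiDvd)
  -- Step 3 : (q i₄)^p divides p * (q i₁)^h₁ - 1
  have h3 : ((q i₄ : ℤ)) ^ p ∣ (p : ℤ) * (q i₁ : ℤ) ^ h₁ - 1 := by
    rw [← hΦ3]
    have hp3eval : Phi (p ^ 3) ((q i₄ : ℤ)) =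
        ∑ i ∈ Finset.range p, (((q i₄ : ℤ)) ^ p ^ 2) ^ i := aux_phi_eval p 2 hp _
    obtain ⟨m, hm⟩ := Nat.exists_eq_succ_of_ne_zero hp.pos.ne'
    have hgs : Phi (p ^ 3) ((q i₄ : ℤ)) =
        ((q i₄ : ℤ)) ^ p ^ 2 * ∑ i ∈ Finset.range m, (((q i₄ : ℤ)) ^ p ^ 2) ^ i + 1 := by
      rw [hp3eval, hm, geom_sum_succ]
    have hd2 : ((q i₄ : ℤ)) ^ p ^ 2 ∣ Phi (p ^ 3) ((q i₄ : ℤ)) - 1 := by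
      rw [hgs, add_sub_cancel_right]
      exact dvd_mul_right _ _
    exact (pow_dvd_pow _ (Nat.le_self_pow two_ne_zero p)).trans hd2
  -- Step 4 : (q i₄)^p divides p^(p^2) - 1
  have h4 : ((q i₄ : ℤ)) ^ p ∣ (p : ℤ) ^ p ^ 2 - 1 := by
    have hx : ((q i₄ : ℤ)) ^ p ∣ ((p : ℤ) * (q i₁ : ℤ) ^ h₁) ^ p ^ 2 - 1 :=
      h3.trans (by simpa using sub_dvd_pow_sub_pow ((p : ℤ) * (q i₁ : ℤ) ^ h₁) 1 (p ^ 2))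
    have hy : ((q i₄ : ℤ)) ^ p ∣ ((q i₁ : ℤ) ^ p ^ 2) ^ h₁ - 1 :=
      h2.trans (by simpa using sub_dvd_pow_sub_pow ((q i₁ : ℤ) ^ p ^ 2) 1 h₁)
    have key : (p : ℤ) ^ p ^ 2 - 1 =
        (((p : ℤ) * (q i₁ : ℤ) ^ h₁) ^ p ^ 2 - 1) -
          (p : ℤ) ^ p ^ 2 * (((q i₁ : ℤ) ^ p ^ 2) ^ h₁ - 1) := by
      rw [mul_pow, ← pow_mul, ← pow_mul, Nat.mul_comm h₁ (p ^ 2)]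
      ring
    rw [key]
    exact dvd_sub hx (hy.mul_left _)
  -- q i₄ does not divide p^p - 1
  have hppos : (0 : ℤ) < (p : ℤ) ^ p - 1 := by
    have : (2 : ℤ) ≤ (p : ℤ) := by exact_mod_cast hp.two_le
    have h2p : (2 : ℤ) ^ p ≤ (p : ℤ) ^ p := pow_le_pow_left₀ (by norm_num) this p
    have : (2 : ℤ) ≤ (2 : ℤ) ^ p := by
      calc (2 : ℤ) = 2 ^ 1 := by norm_num
      _ ≤ 2 ^ p := pow_le_pow_right₀ (by norm_num) hp.one_lt.le
    linarith
  have hfac : (p : ℤ) ^ p ^ 2 - 1 = ((p : ℤ) ^ p - 1) * Phi (p ^ 2) ((p : ℤ)) :=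
    aux_phi_mul p hp _
  have hnotdvd : ¬ ((q i₄ : ℤ)) ∣ ((p : ℤ) ^ p - 1) := by
    intro hcon
    have hcong : ((q i₄ : ℤ)) ∣ Phi (p ^ 2) ((p : ℤ)) - (p : ℤ) := by
      have he : Phi (p ^ 2) ((p : ℤ)) = ∑ i ∈ Finset.range p, (((p : ℤ)) ^ p) ^ i := by
        have h2 := aux_phi_eval p 1 hp ((p : ℤ))
        norm_num at h2
        exact h2
      rw [he]
      exact aux_dvd_geom_sum_sub _ _ _ hcon
    have hnotΦ : ¬ ((q i₄ : ℤ)) ∣ Phi (p ^ 2) ((p : ℤ)) := by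
      intro hdΦ
      have : ((q i₄ : ℤ)) ∣ (p : ℤ) := by
        have := dvd_sub hdΦ hcong
        simpa using this
      exact hQnp this
    have hcop : IsCoprime (((q i₄ : ℤ)) ^ p) (Phi (p ^ 2) ((p : ℤ))) :=
      ((hQprime.coprime_iff_not_dvd).mpr hnotΦ).pow_left
    have hdvd : ((q i₄ : ℤ)) ^ p ∣ (p : ℤ) ^ p - 1 := by
      refine hcop.dvd_of_dvd_mul_right ?_
      rw [← hfac]; exact h4
    have hle : ((q i₄ : ℤ)) ^ p ≤ (p : ℤ) ^ p - 1 := Int.le_of_dvd hppos hdvd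
    have hlt : (p : ℤ) ^ p < ((q i₄ : ℤ)) ^ p := by
      refine pow_lt_pow_left₀ ?_ (by positivity) hp.pos.ne'
      exact_mod_cast hQgtp
    linarith
  -- First conjunct
  have hgoal1 : (q i₄ : ℤ) ^ p ∣ Phi (p ^ 2) ((p : ℤ)) := by
    have hcop : IsCoprime (((q i₄ : ℤ)) ^ p) ((p : ℤ) ^ p - 1) :=
      ((hQprime.coprime_iff_not_dvd).mpr hnotdvd).pow_left
    refine hcop.dvd_of_dvd_mul_left ?_
    rw [← hfac]; exact h4
  refine ⟨hgoal1, ?_⟩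
  -- Second conjunct : q i₄ ≡ 1 [MOD p^2]
  haveI : Fact (q i₄).Prime := ⟨hq i₄⟩
  set a : ZMod (q i₄) := ((q i₁ : ℕ) : ZMod (q i₄)) with ha
  have hQ1 : ((q i₄ : ℤ)) ∣ (q i₁ : ℤ) ^ p ^ 2 - 1 :=
    (dvd_pow_self _ hp.pos.ne').trans h2
  have ha2 : a ^ p ^ 2 = 1 := by
    have := (ZMod.intCast_zmod_eq_zero_iff_dvd ((q i₁ : ℤ) ^ p ^ 2 - 1) (q i₄)).mpr hQ1
    push_cast at this
    rw [sub_eq_zero] at this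
    exact this
  have hap : a ^ p ≠ 1 := by
    intro hcon
    have hdint : ((q i₄ : ℤ)) ∣ (q i₁ : ℤ) ^ p - 1 := by
      rw [← ZMod.intCast_zmod_eq_zero_iff_dvd]
      push_cast
      rw [sub_eq_zero]
      exact hcon
    have hcong : ((q i₄ : ℤ)) ∣ Phi (p ^ 2) ((q i₁ : ℤ)) - (p : ℤ) := by
      have he : Phi (p ^ 2) ((q i₁ : ℤ)) =
          ∑ i ∈ Finset.range p, (((q i₁ : ℤ)) ^ p) ^ i := by
        have h2 := aux_phi_eval p 1 hp ((q i₁ : ℤ))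
        norm_num at h2
        exact h2
      rw [he]
      exact aux_dvd_geom_sum_sub _ _ _ hdint
    have hdΦ : ((q i₄ : ℤ)) ∣ Phi (p ^ 2) ((q i₁ : ℤ)) :=
      (dvd_pow_self _ he₄.ne').trans hQe4
    have : ((q i₄ : ℤ)) ∣ (p : ℤ) := by
      have := dvd_sub hdΦ hcong
      simpa using this
    exact hQnp this
  have hord : orderOf a = p ^ 2 := by
    have hdvd : orderOf a ∣ p ^ 2 := orderOf_dvd_of_pow_eq_one ha2
    rcases (Nat.dvd_prime_pow hp).mp hdvd with ⟨k, hk, hexp⟩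
    rcases Nat.lt_or_ge k 2 with hk2 | hk2
    · exfalso
      apply hap
      have : orderOf a ∣ p := by
        rw [hexp]
        calc p ^ k ∣ p ^ 1 := pow_dvd_pow p (by omega)
        _ = p := pow_one p
      exact orderOf_dvd_iff_pow_eq_one.mp this
    · rw [hexp]
      congr 1
      omega
  have hane : a ≠ 0 := by
    rw [ha, Ne, ZMod.natCast_eq_zero_iff]
    intro hdvd
    have heq : q i₄ = q i₁ := ((Nat.prime_dvd_prime_iff_eq (hq i₄) (hq i₁)).mp hdvd)
    exact hij.2.2.1 (hinj heq.symm)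
  have hcard : a ^ (q i₄ - 1) = 1 := ZMod.pow_card_sub_one_eq_one hane
  have hdvdcard : p ^ 2 ∣ q i₄ - 1 := hord ▸ orderOf_dvd_of_pow_eq_one hcard
  have : (1 : ℕ) ≡ q i₄ [MOD p ^ 2] :=
    (Nat.modEq_iff_dvd' (hq i₄).one_lt.le).mpr hdvdcard
  exact this.symm
end
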